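/- arXiv:1802.00417 — 4 statements merged into one kernel-verified Lean document; each statement's English description precedes it below -/
import Mathlib

section
/- The polynomials g_1,…,g_{r−c} form a regular sequence in the polynomial ring 𝕂[T_{ij},S_k]; in particular, the quotient R = 𝕂[T_{ij},S_k]/⟨g_1,…,g_{r−c}⟩ is a complete intersection ring. -/
open MvPolynomial

noncomputable section

/-- Index type for the variables `T i j` (`Sum.inl ⟨i, j⟩`) and `S k` (`Sum.inr k`). -/
abbrev VarIdx (r m : ℕ) (nn : Fin (r + 1) → ℕ) : Type :=
  (Σ i : Fin (r + 1), Fin (nn i)) ⊕ Fin m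

variable (𝕂 : Type) [Field 𝕂]

/-- The monomial `T_i^{l_i} = ∏_j T_{ij}^{l_{ij}}`. -/
def Tmon (r m : ℕ) (nn : Fin (r + 1) → ℕ)
    (l : ∀ i : Fin (r + 1), Fin (nn i) → ℕ) (i : Fin (r + 1)) :
    MvPolynomial (VarIdx r m nn) 𝕂 :=
  ∏ j : Fin (nn i), (X (Sum.inl ⟨i, j⟩) : MvPolynomial (VarIdx r m nn) 𝕂) ^ l i j

/-- The map sending a column index of the `(c+2)×(c+2)` matrix defining `g_t`
to the corresponding column index of `A`, namely `0, …, c, c + (t+1)`. -/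
def colOf (r c : ℕ) (hcr : c ≤ r) (t : Fin (r - c)) (p : Fin (c + 2)) : Fin (r + 1) :=
  if h : (p : ℕ) ≤ c then ⟨p, by omega⟩
  else ⟨c + 1 + t, by have := t.isLt; omega⟩

/-- The polynomial `g_t`: the determinant of the `(c+2)×(c+2)` matrix whose first
`c+1` rows are formed by the columns `a_0, …, a_c, a_{c+t}` of `A` (as constant
polynomials) and whose last row is `(T_0^{l_0}, …, T_c^{l_c}, T_{c+t}^{l_{c+t}})`. -/
def gPoly (r c m : ℕ) (hcr : c ≤ r) (nn : Fin (r + 1) → ℕ)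
    (l : ∀ i : Fin (r + 1), Fin (nn i) → ℕ)
    (A : Matrix (Fin (c + 1)) (Fin (r + 1)) 𝕂) (t : Fin (r - c)) :
    MvPolynomial (VarIdx r m nn) 𝕂 :=
  Matrix.det (Matrix.of fun q p : Fin (c + 2) =>
    if h : (q : ℕ) < c + 1 then C (A ⟨q, h⟩ (colOf r c hcr t p))
    else Tmon 𝕂 r m nn l (colOf r c hcr t p))

/-- The ring `R = 𝕂[T_{ij}, S_k] / ⟨g_1, …, g_{r-c}⟩`. -/
abbrev RingAP (r c m : ℕ) (hcr : c ≤ r) (nn : Fin (r + 1) → ℕ)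
    (l : ∀ i : Fin (r + 1), Fin (nn i) → ℕ)
    (A : Matrix (Fin (c + 1)) (Fin (r + 1)) 𝕂) : Type :=
  MvPolynomial (VarIdx r m nn) 𝕂 ⧸ Ideal.span (Set.range (gPoly 𝕂 r c m hcr nn l A))

end

/-!
Expanding along the last row, `g_t = κ T_{c+t}^{l_{c+t}} + (terms in T_0, …, T_c)` with
`κ = det [a_0 ⋯ a_c] ≠ 0`. The earlier `g_s` do not involve the variables `T_{c+t,j}`, so
splitting these off identifies `𝕂[T, S] ⧸ ⟨g_1, …, g_{t-1}⟩` with a polynomial ring `B[T_{c+t,j}]`,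
in which `g_t` is a unit times a monomial plus a constant, hence a nonzerodivisor (compare
top-degree coefficients). All `g_t` vanish at the origin, so the ideal they generate is proper.
-/

namespace MvPolynomial

variable {σ R : Type*} [CommRing R]

theorem isLeftRegular_C_mul_monomial_add_C {d : σ →₀ ℕ} (hd : d ≠ 0) {α : R} (hα : IsUnit α)
    (b : R) : IsLeftRegular (C α * monomial d 1 + C b) := by
  classical
  refine isLeftRegular_iff_right_eq_zero_of_mul.mpr fun f hf => ?_
  by_contra hf0
  -- compare coefficients at `d + D`, where `D` is a monomial of `f` of top total degree
  obtain ⟨D, hD, hDdeg⟩ := Finset.exists_mem_eq_sup f.support (support_nonempty.mpr hf0)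
    fun s => s.degree
  have hlt : f.totalDegree < (d + D).degree := by
    have hdeg : f.totalDegree = D.degree := hDdeg
    have := (Finsupp.degree_eq_zero_iff d).not.mpr hd
    rw [map_add, hdeg]
    omega
  have hcoeff : coeff (d + D) ((C α * monomial d 1 + C b) * f) = α * coeff D f := by
    rw [add_mul, coeff_add, C_mul_monomial, mul_one, coeff_monomial_mul, coeff_C_mul,
      coeff_eq_zero_of_totalDegree_lt hlt, mul_zero, add_zero]
  rw [hf, coeff_zero, eq_comm, hα.mul_right_eq_zero] at hcoeff
  exact mem_support_iff.mp hD hcoeff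

theorem mem_map_C_of_mul_mem {I : Ideal R} {f x : MvPolynomial σ R}
    (hf : IsLeftRegular (map (Ideal.Quotient.mk I) f)) (hx : f * x ∈ Ideal.map C I) :
    x ∈ Ideal.map C I := by
  rw [← Ideal.mk_ker (I := I), ← ker_map, RingHom.mem_ker] at hx ⊢
  rw [map_mul] at hx
  exact hf.mul_left_eq_zero_iff.mp hx

section splitVars

variable (p : σ → Prop) [DecidablePred p]

noncomputable def splitVarsEquiv :
    MvPolynomial σ R ≃ₐ[R] MvPolynomial {x // p x} (MvPolynomial {x // ¬ p x} R) :=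
  (renameEquiv R (Equiv.sumCompl p).symm).trans (sumAlgEquiv R _ _)

variable {p}

theorem splitVarsEquiv_X_of_pos {x : σ} (hx : p x) :
    splitVarsEquiv p (X x : MvPolynomial σ R) = X ⟨x, hx⟩ := by
  simp [splitVarsEquiv, Equiv.sumCompl_symm_apply_of_pos hx]

theorem splitVarsEquiv_X_of_neg {x : σ} (hx : ¬ p x) :
    splitVarsEquiv p (X x : MvPolynomial σ R) = C (X ⟨x, hx⟩) := by
  simp [splitVarsEquiv, Equiv.sumCompl_symm_apply_of_neg hx]

theorem splitVarsEquiv_C (a : R) : splitVarsEquiv p (C a : MvPolynomial σ R) = C (C a) :=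
  (splitVarsEquiv p).commutes a

/-- `splitVarsEquiv p` identifies the quotient with `(R[¬p] ⧸ I)[p]`, where `f` becomes
`α Y^d + b`. -/
theorem isSMulRegular_quotient_span_of_splitVarsEquiv {G : Set (MvPolynomial σ R)}
    (hG : ∀ g ∈ G, splitVarsEquiv p g ∈ (C : MvPolynomial {x // ¬ p x} R →+*
      MvPolynomial {x // p x} (MvPolynomial {x // ¬ p x} R)).range)
    {f : MvPolynomial σ R} {d : {x // p x} →₀ ℕ} (hd : d ≠ 0) {α : R} (hα : IsUnit α)
    {b : MvPolynomial {x // ¬ p x} R} (hf : splitVarsEquiv p f = C (C α) * monomial d 1 + C b) :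
    IsSMulRegular (MvPolynomial σ R ⧸ Ideal.span G) f := by
  rw [isSMulRegular_quotient_iff_mem_of_smul_mem]
  intro x hx
  set φ : MvPolynomial σ R ≃+* _ := (splitVarsEquiv p).toRingEquiv
  have hspan : Ideal.map φ (Ideal.span G) = Ideal.map C (Ideal.span (C ⁻¹' (φ '' G))) := by
    rw [Ideal.map_span, Ideal.map_span, Set.image_preimage_eq_of_subset]
    rintro _ ⟨g, hg, rfl⟩
    exact hG g hg
  rw [← Ideal.apply_mem_of_equiv_iff (f := φ), hspan] at hx ⊢
  rw [smul_eq_mul, map_mul] at hx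
  refine mem_map_C_of_mul_mem ?_ hx
  simpa [φ, hf, map_monomial] using
    isLeftRegular_C_mul_monomial_add_C hd ((hα.map C).map (Ideal.Quotient.mk _)) _

end splitVars

end MvPolynomial

section

variable {𝕂 : Type} [Field 𝕂] {r c m : ℕ} {nn : Fin (r + 1) → ℕ}

theorem colOf_castSucc (hcr : c ≤ r) (t : Fin (r - c)) (j : Fin (c + 1)) :
    colOf r c hcr t j.castSucc = Fin.castLE (by omega) j := by
  simp [colOf, Fin.ext_iff, Nat.le_of_lt_succ j.isLt]

theorem colOf_last (hcr : c ≤ r) (t : Fin (r - c)) :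
    colOf r c hcr t (Fin.last (c + 1)) = ⟨c + 1 + t, by omega⟩ := by
  simp [colOf]

/-- Laplace expansion along the last row; only the cofactor of `T_{c+t}^{l_{c+t}}` is needed
explicitly. -/
theorem exists_gPoly_eq (hcr : c ≤ r) (l : ∀ i : Fin (r + 1), Fin (nn i) → ℕ)
    (A : Matrix (Fin (c + 1)) (Fin (r + 1)) 𝕂) (t : Fin (r - c)) :
    ∃ κ : Fin (c + 1) → 𝕂, gPoly 𝕂 r c m hcr nn l A t =
      ∑ j, C (κ j) * Tmon 𝕂 r m nn l (Fin.castLE (by omega) j) +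
        C (A.submatrix id (Fin.castLE (by omega))).det * Tmon 𝕂 r m nn l ⟨c + 1 + t, by omega⟩ := by
  refine ⟨fun j => (-1) ^ (c + 1 + (j : ℕ)) *
    (A.submatrix id (colOf r c hcr t ∘ j.castSucc.succAbove)).det, ?_⟩
  rw [gPoly]
  set M : Matrix (Fin (c + 2)) (Fin (c + 2)) (MvPolynomial (VarIdx r m nn) 𝕂) :=
    Matrix.of fun q p => if h : (q : ℕ) < c + 1 then C (A ⟨q, h⟩ (colOf r c hcr t p))
      else Tmon 𝕂 r m nn l (colOf r c hcr t p)
  have hlast (k : Fin (c + 2)) : M (Fin.last (c + 1)) k = Tmon 𝕂 r m nn l (colOf r c hcr t k) := by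
    simp [M]
  have hminor (k : Fin (c + 2)) : M.submatrix (Fin.last (c + 1)).succAbove k.succAbove =
      (C : 𝕂 →+* _).mapMatrix (A.submatrix id (colOf r c hcr t ∘ k.succAbove)) := by
    refine Matrix.ext fun q p => ?_
    simp [M, q.is_le]
  rw [Matrix.det_succ_row _ (Fin.last (c + 1)), Fin.sum_univ_castSucc]
  refine congrArg₂ (· + ·) ?_ ?_
  · refine Finset.sum_congr rfl fun j _ => ?_
    rw [hlast, hminor, ← RingHom.map_det, colOf_castSucc]
    simp only [map_mul, map_pow, map_neg, map_one, Fin.val_last, Fin.val_castSucc]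
    ring
  · have hsub : colOf r c hcr t ∘ (Fin.last (c + 1)).succAbove = Fin.castLE (by omega) := by
      ext p
      simp [colOf_castSucc]
    rw [hlast, hminor, ← RingHom.map_det, colOf_last, hsub, Fin.val_last, ← two_mul,
      pow_mul, neg_one_sq, one_pow, one_mul, mul_comm]

theorem det_submatrix_castLE_ne_zero (hcr : c ≤ r) (A : Matrix (Fin (c + 1)) (Fin (r + 1)) 𝕂)
    (hA : ∀ s : Finset (Fin (r + 1)), s.card = c + 1 →
      LinearIndependent 𝕂 fun j : s => A.transpose (j : Fin (r + 1))) :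
    (A.submatrix id (Fin.castLE (by omega : c + 1 ≤ r + 1))).det ≠ 0 := by
  set e : Fin (c + 1) ↪ Fin (r + 1) := Fin.castLEEmb (by omega)
  have hcols : LinearIndependent 𝕂 fun j => (A.submatrix id e).transpose j :=
    (hA (Finset.univ.map e) (by simp)).comp (fun j => ⟨e j, by simp⟩)
      fun i j hij => e.injective (congrArg Subtype.val hij)
  exact (Matrix.isUnit_iff_isUnit_det _).mp (Matrix.linearIndependent_cols_iff_isUnit.mp hcols)
    |>.ne_zero

def InBlock (i₀ : Fin (r + 1)) : VarIdx r m nn → Prop :=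
  Sum.elim (fun y => y.1 = i₀) fun _ => False

instance (i₀ : Fin (r + 1)) : DecidablePred (InBlock (m := m) (nn := nn) i₀)
  | .inl y => inferInstanceAs (Decidable (y.1 = i₀))
  | .inr _ => inferInstanceAs (Decidable False)

variable (l : ∀ i : Fin (r + 1), Fin (nn i) → ℕ)

noncomputable def blockDegree (i₀ : Fin (r + 1)) : {x : VarIdx r m nn // InBlock i₀ x} →₀ ℕ :=
  ∑ j, Finsupp.single ⟨.inl ⟨i₀, j⟩, rfl⟩ (l i₀ j)

theorem blockDegree_ne_zero {i₀ : Fin (r + 1)} {j : Fin (nn i₀)} (hj : l i₀ j ≠ 0) :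
    blockDegree (m := m) l i₀ ≠ 0 := by
  simpa [blockDegree, Finset.sum_eq_zero_iff] using ⟨j, hj⟩

theorem splitVarsEquiv_Tmon_self (i₀ : Fin (r + 1)) :
    splitVarsEquiv (InBlock i₀) (Tmon 𝕂 r m nn l i₀) = monomial (blockDegree l i₀) 1 := by
  rw [Tmon, map_prod, blockDegree, monomial_sum_one]
  refine Finset.prod_congr rfl fun j _ => ?_
  rw [map_pow, splitVarsEquiv_X_of_pos (p := InBlock i₀) (x := .inl ⟨i₀, j⟩) rfl, X_pow_eq_monomial]

theorem splitVarsEquiv_Tmon_mem_range {i₀ i : Fin (r + 1)} (h : i ≠ i₀) :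
    splitVarsEquiv (InBlock i₀) (Tmon 𝕂 r m nn l i) ∈
      (C : MvPolynomial {x // ¬ InBlock i₀ x} 𝕂 →+*
        MvPolynomial {x // InBlock i₀ x} (MvPolynomial {x // ¬ InBlock i₀ x} 𝕂)).range := by
  rw [Tmon, map_prod]
  refine prod_mem fun j _ => ?_
  rw [map_pow]
  refine pow_mem ?_ _
  rw [splitVarsEquiv_X_of_neg (p := InBlock i₀) (x := .inl ⟨i, j⟩) h]
  exact ⟨X _, rfl⟩

variable {l}

theorem constantCoeff_Tmon {i : Fin (r + 1)} {j : Fin (nn i)} (hj : l i j ≠ 0) :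
    constantCoeff (Tmon 𝕂 r m nn l i) = 0 := by
  rw [Tmon, map_prod]
  exact Finset.prod_eq_zero (Finset.mem_univ j) (by simp [hj])

theorem isSMulRegular_gPoly (hcr : c ≤ r) (hnn : ∀ i, 0 < nn i) (hl : ∀ i j, 0 < l i j)
    (A : Matrix (Fin (c + 1)) (Fin (r + 1)) 𝕂)
    (hA : ∀ s : Finset (Fin (r + 1)), s.card = c + 1 →
      LinearIndependent 𝕂 fun j : s => A.transpose (j : Fin (r + 1)))
    (i : Fin (r - c)) :
    IsSMulRegular (MvPolynomial (VarIdx r m nn) 𝕂 ⧸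
        Ideal.ofList ((List.ofFn (gPoly 𝕂 r c m hcr nn l A)).take i))
      (gPoly 𝕂 r c m hcr nn l A i) := by
  have hc : c + 1 ≤ r + 1 := by omega
  set i₀ : Fin (r + 1) := ⟨c + 1 + i, by omega⟩
  set φ := splitVarsEquiv (R := 𝕂) (InBlock (m := m) (nn := nn) i₀)
  have hfirst (κ : Fin (c + 1) → 𝕂) :
      φ (∑ j, C (κ j) * Tmon 𝕂 r m nn l (Fin.castLE hc j)) ∈ RingHom.range C := by
    rw [map_sum]
    refine sum_mem fun j _ => ?_
    rw [map_mul, splitVarsEquiv_C]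
    refine mul_mem ⟨_, rfl⟩ (splitVarsEquiv_Tmon_mem_range l ?_)
    simp [i₀, Fin.ext_iff]
    omega
  have hprev (t : Fin (r - c)) (ht : (t : ℕ) < i) :
      φ (gPoly 𝕂 r c m hcr nn l A t) ∈ RingHom.range C := by
    obtain ⟨κ, hκ⟩ := exists_gPoly_eq (m := m) hcr l A t
    rw [hκ, map_add, map_mul, splitVarsEquiv_C]
    refine add_mem (hfirst κ) (mul_mem ⟨_, rfl⟩ (splitVarsEquiv_Tmon_mem_range l ?_))
    simp [i₀, Fin.ext_iff]
    omega
  obtain ⟨κ, hκ⟩ := exists_gPoly_eq (m := m) hcr l A i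
  obtain ⟨b, hb⟩ := hfirst κ
  refine isSMulRegular_quotient_span_of_splitVarsEquiv ?_
    (blockDegree_ne_zero l (j := ⟨0, hnn i₀⟩) (hl _ _).ne')
    (isUnit_iff_ne_zero.mpr (det_submatrix_castLE_ne_zero hcr A hA)) (b := b) ?_
  · intro g hg
    obtain ⟨k, hk, rfl⟩ := List.mem_take_iff_getElem.mp hg
    simp only [List.length_ofFn, lt_min_iff] at hk
    simpa using hprev ⟨k, hk.2⟩ hk.1
  · rw [hκ, map_add, hb, map_mul, splitVarsEquiv_C, splitVarsEquiv_Tmon_self, add_comm]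

theorem constantCoeff_gPoly (hcr : c ≤ r) (hnn : ∀ i, 0 < nn i) (hl : ∀ i j, 0 < l i j)
    (A : Matrix (Fin (c + 1)) (Fin (r + 1)) 𝕂) (t : Fin (r - c)) :
    constantCoeff (gPoly 𝕂 r c m hcr nn l A t) = 0 := by
  obtain ⟨κ, hκ⟩ := exists_gPoly_eq (m := m) hcr l A t
  simp [hκ, constantCoeff_Tmon (j := ⟨0, hnn _⟩) (hl _ _).ne']

end

theorem statement_3_general
    (𝕂 : Type) [Field 𝕂]
    (r c m : ℕ) (hcr : c ≤ r)
    (nn : Fin (r + 1) → ℕ) (hnn : ∀ i, 0 < nn i)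
    (l : ∀ i : Fin (r + 1), Fin (nn i) → ℕ) (hl : ∀ i j, 0 < l i j)
    (A : Matrix (Fin (c + 1)) (Fin (r + 1)) 𝕂)
    (hA : ∀ s : Finset (Fin (r + 1)), s.card = c + 1 →
      LinearIndependent 𝕂 fun j : s => A.transpose (j : Fin (r + 1)))
    :
    RingTheory.Sequence.IsRegular (MvPolynomial (VarIdx r m nn) 𝕂)
      (List.ofFn (gPoly 𝕂 r c m hcr nn l A)) := by
  have smul_top (I : Ideal (MvPolynomial (VarIdx r m nn) 𝕂)) : I • ⊤ = I := by
    rw [Ideal.smul_eq_mul, Ideal.mul_top]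
  refine ⟨(RingTheory.Sequence.isWeaklyRegular_iff _ _).mpr fun i hi => ?_, ?_⟩
  · rw [smul_top, List.getElem_ofFn]
    exact isSMulRegular_gPoly hcr hnn hl A hA ⟨i, by simpa using hi⟩
  · rw [smul_top]
    refine (ne_top_of_le_ne_top (RingHom.ker_ne_top constantCoeff) (Ideal.span_le.mpr ?_)).symm
    intro g hg
    obtain ⟨t, rfl⟩ := List.mem_ofFn.mp hg
    exact constantCoeff_gPoly hcr hnn hl A t

/-- The polynomials `g_1, …, g_{r−c}` form a regular sequence in the
polynomial ring `𝕂[T_{ij},S_k]` (hence the quotient is a complete intersection ring). -/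
theorem statement_3
    (𝕂 : Type) [Field 𝕂] [IsAlgClosed 𝕂] [CharZero 𝕂]
    (r c m : ℕ) (hc : 0 < c) (hcr : c ≤ r)
    (nn : Fin (r + 1) → ℕ) (hnn : ∀ i, 0 < nn i)
    (l : ∀ i : Fin (r + 1), Fin (nn i) → ℕ) (hl : ∀ i j, 0 < l i j)
    (A : Matrix (Fin (c + 1)) (Fin (r + 1)) 𝕂)
    (hA : ∀ s : Finset (Fin (r + 1)), s.card = c + 1 →
      LinearIndependent 𝕂 fun j : s => A.transpose (j : Fin (r + 1)))
    :
    RingTheory.Sequence.IsRegular (MvPolynomial (VarIdx r m nn) 𝕂)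
      (List.ofFn (gPoly 𝕂 r c m hcr nn l A)) :=
  statement_3_general 𝕂 r c m hcr nn hnn l hl A hA
end

section
/- If z ∈ 𝕂^{n+m} is of leaf type, then there exists t ∈ 𝕂^{n+m} with all coordinates nonzero such that the componentwise product t·z lies in X̄. -/
open MvPolynomial

noncomputable section
variable (𝕂 : Type) [Field 𝕂]

/-- A point `z ∈ 𝕂^{n+m}` is of big type if for every `i = 0,…,r` some
coordinate `z_{ij}` vanishes. -/
def BigType (r m : ℕ) (nn : Fin (r + 1) → ℕ) (z : VarIdx r m nn → 𝕂) : Prop :=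
  ∀ i : Fin (r + 1), ∃ j : Fin (nn i), z (Sum.inl ⟨i, j⟩) = 0

/-- A point `z ∈ 𝕂^{n+m}` is of leaf type if there is a set `I ⊆ {0,…,r}` with at most
`c` elements such that `z_{ij} = 0` implies `i ∈ I`. -/
def LeafType (r c m : ℕ) (nn : Fin (r + 1) → ℕ) (z : VarIdx r m nn → 𝕂) : Prop :=
  ∃ I : Finset (Fin (r + 1)), I.card ≤ c ∧
    ∀ (i : Fin (r + 1)) (j : Fin (nn i)), z (Sum.inl ⟨i, j⟩) = 0 → i ∈ I

/-- The Jacobian matrix of `g_1, …, g_{r-c}` evaluated at the point `z`. -/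
def Jac (r c m : ℕ) (hcr : c ≤ r) (nn : Fin (r + 1) → ℕ)
    (l : ∀ i : Fin (r + 1), Fin (nn i) → ℕ)
    (A : Matrix (Fin (c + 1)) (Fin (r + 1)) 𝕂) (z : VarIdx r m nn → 𝕂) :
    Matrix (Fin (r - c)) (VarIdx r m nn) 𝕂 :=
  Matrix.of fun t v =>
    MvPolynomial.eval z (MvPolynomial.pderiv v (gPoly 𝕂 r c m hcr nn l A t))

end

/-!
Let `Z` be the set of blocks `i` in which some coordinate `z_{ij}` vanishes; leaf type means
`|Z| ≤ c`. Since any `c + 1` columns of `A` are independent, no column outside `Z` lies in the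
span of the columns in `Z`, and over an infinite field one functional `y` then satisfies
`(y A)_i = 0 ↔ i ∈ Z`. As `𝕂` is algebraically closed, rescaling one coordinate per block gives
`T_i^{l_i}(t·z) = (y A)_i` for every `i`. The last row of each matrix defining `g_t` is then
`y` times its first `c + 1` rows, so every `g_t` vanishes at `t·z`.
-/
theorem Module.exists_dual_apply_eq_zero_iff {K V ι : Type*} [Field K] [Infinite K]
    [AddCommGroup V] [Module K V] [Finite ι] (v : ι → V) (Z : Set ι)
    (hv : ∀ i ∉ Z, v i ∉ Submodule.span K (v '' Z)) :
    ∃ f : Dual K V, ∀ i, f (v i) = 0 ↔ i ∈ Z := by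
  set W := Submodule.span K (v '' Z)
  have hsep : ∀ i : {i // i ∉ Z}, ∃ f ∈ W.dualAnnihilator, Dual.eval K V (v i) f ≠ 0 := by
    rintro ⟨i, hi⟩
    obtain ⟨f, hfi, hfW⟩ := Submodule.exists_dual_map_eq_bot_of_notMem (hv i hi) inferInstance
    refine ⟨f, (Submodule.mem_dualAnnihilator f).2 fun w hw => ?_, hfi⟩
    simpa [hfW] using Submodule.mem_map_of_mem (f := f) hw
  obtain ⟨f, hfW, hf⟩ := Dual.exists_forall_mem_ne_zero_of_forall_exists _ _ hsep
  refine ⟨f, fun i => ⟨fun hfi => ?_, fun hi => ?_⟩⟩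
  · by_contra hi
    exact hf ⟨i, hi⟩ hfi
  · exact (Submodule.mem_dualAnnihilator f).1 hfW _ (Submodule.subset_span ⟨i, hi, rfl⟩)

open Matrix

theorem notMem_span_image_of_linearIndepOn_card_eq {K V ι : Type*} [Field K] [AddCommGroup V]
    [Module K V] [Fintype ι] {c : ℕ} (hι : c + 1 ≤ Fintype.card ι) (v : ι → V)
    (hv : ∀ s : Finset ι, s.card = c + 1 → LinearIndepOn K v (s : Set ι))
    {Z : Finset ι} (hZ : Z.card ≤ c) {i : ι} (hi : i ∉ Z) :
    v i ∉ Submodule.span K (v '' Z) := by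
  classical
  obtain ⟨S, hiZS, hS⟩ := Finset.exists_superset_card_eq
    ((Finset.card_insert_le i Z).trans (Nat.succ_le_succ hZ)) (by simpa using hι)
  have hindep : LinearIndepOn K v (insert i (Z : Set ι)) :=
    (hv S hS).mono (by rw [← Finset.coe_insert]; exact_mod_cast hiZS)
  exact ((linearIndepOn_insert (by simpa using hi)).1 hindep).2

theorem Matrix.exists_vecMul_apply_eq_zero_iff {K κ ι : Type*} [Field K] [Infinite K]
    [Fintype κ] [DecidableEq κ] [Fintype ι] {c : ℕ} (hι : c + 1 ≤ Fintype.card ι)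
    (A : Matrix κ ι K)
    (hA : ∀ s : Finset ι, s.card = c + 1 → LinearIndepOn K Aᵀ (s : Set ι))
    {Z : Finset ι} (hZ : Z.card ≤ c) :
    ∃ y : κ → K, ∀ i, (y ᵥ* A) i = 0 ↔ i ∈ Z := by
  obtain ⟨f, hf⟩ := Module.exists_dual_apply_eq_zero_iff Aᵀ Z
    fun i hi => notMem_span_image_of_linearIndepOn_card_eq hι Aᵀ hA hZ hi
  refine ⟨fun k => f (Pi.single k 1), fun i => ?_⟩
  have hsingle (k : κ) : (fun j => if k = j then (1 : K) else 0) = Pi.single k 1 := by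
    ext j
    simp [Pi.single_apply, eq_comm]
  rw [← Finset.mem_coe, ← hf i, LinearMap.pi_apply_eq_sum_univ f]
  simp [vecMul, dotProduct, mul_comm, hsingle]

theorem IsAlgClosed.exists_prod_mul_pow_eq {K J : Type*} [Field K] [IsAlgClosed K] [Fintype J]
    [Nonempty J] (e : J → ℕ) (he : ∀ j, 0 < e j) (x : J → K) {b : K}
    (hb : b = 0 ↔ ∃ j, x j = 0) :
    ∃ s : J → K, (∀ j, s j ≠ 0) ∧ ∏ j, (s j * x j) ^ e j = b := by
  classical
  by_cases hx : ∃ j, x j = 0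
  · obtain ⟨j, hj⟩ := hx
    refine ⟨1, fun _ => one_ne_zero, ?_⟩
    rw [hb.2 ⟨j, hj⟩]
    exact Finset.prod_eq_zero (Finset.mem_univ j) (by simp [hj, (he j).ne'])
  have hP : ∏ j, x j ^ e j ≠ 0 :=
    Finset.prod_ne_zero_iff.2 fun j _ => pow_ne_zero _ fun h => hx ⟨j, h⟩
  have hb0 : b ≠ 0 := fun h => hx (hb.1 h)
  obtain j₀ : J := Classical.arbitrary J
  obtain ⟨ξ, hξ⟩ := IsAlgClosed.exists_pow_nat_eq (b / ∏ j, x j ^ e j) (he j₀)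
  have hξ0 : ξ ≠ 0 := by
    rintro rfl
    rw [zero_pow (he j₀).ne'] at hξ
    exact div_ne_zero hb0 hP hξ.symm
  refine ⟨Function.update 1 j₀ ξ, fun j => ?_, ?_⟩
  · rcases eq_or_ne j j₀ with rfl | hj
    · simpa using hξ0
    · simp [hj]
  calc ∏ j, (Function.update (1 : J → K) j₀ ξ j * x j) ^ e j
      = (∏ j, Function.update (1 : J → K) j₀ ξ j ^ e j) * ∏ j, x j ^ e j := by
        rw [← Finset.prod_mul_distrib]
        simp only [mul_pow]
    _ = ξ ^ e j₀ * ∏ j, x j ^ e j := by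
        rw [Fintype.prod_eq_single j₀ fun j hj => by simp [hj]]
        simp
    _ = b := by rw [hξ, div_mul_cancel₀ _ hP]

theorem Matrix.det_of_lastRow_eq_vecMul {R ι : Type*} [CommRing R] {n : ℕ}
    (A : Matrix (Fin (n + 1)) ι R) (col : Fin (n + 2) → ι) (y : Fin (n + 1) → R) :
    (of fun q p : Fin (n + 2) =>
      if h : (q : ℕ) < n + 1 then A ⟨q, h⟩ (col p) else (y ᵥ* A) (col p)).det = 0 := by
  set M := of fun q p : Fin (n + 2) =>
      if h : (q : ℕ) < n + 1 then A ⟨q, h⟩ (col p) else (y ᵥ* A) (col p)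
  have hlast : ∑ q, (Fin.snoc y 0 : Fin (n + 2) → R) q • M q = M (Fin.last (n + 1)) := by
    ext p
    simp [Fin.sum_univ_castSucc, M, vecMul, dotProduct]
  have := det_updateRow_sum M (Fin.last (n + 1)) (Fin.snoc y 0 : Fin (n + 2) → R)
  rwa [hlast, updateRow_eq_self, Fin.snoc_last, zero_smul] at this

section

variable {𝕂 : Type} [Field 𝕂] {r c m : ℕ} {nn : Fin (r + 1) → ℕ}

theorem eval_Tmon (l : ∀ i : Fin (r + 1), Fin (nn i) → ℕ) (x : VarIdx r m nn → 𝕂)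
    (i : Fin (r + 1)) :
    eval x (Tmon 𝕂 r m nn l i) = ∏ j, x (Sum.inl ⟨i, j⟩) ^ l i j := by
  simp [Tmon]

theorem eval_gPoly (hcr : c ≤ r) (l : ∀ i : Fin (r + 1), Fin (nn i) → ℕ)
    (A : Matrix (Fin (c + 1)) (Fin (r + 1)) 𝕂) (t : Fin (r - c)) (x : VarIdx r m nn → 𝕂) :
    eval x (gPoly 𝕂 r c m hcr nn l A t) = (Matrix.of fun q p : Fin (c + 2) =>
      if h : (q : ℕ) < c + 1 then A ⟨q, h⟩ (colOf r c hcr t p)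
      else eval x (Tmon 𝕂 r m nn l (colOf r c hcr t p))).det := by
  rw [gPoly, RingHom.map_det]
  congr 1
  ext q p
  simp only [RingHom.mapMatrix_apply, Matrix.map_apply, Matrix.of_apply]
  split_ifs <;> simp

end

theorem statement_13_general
    (𝕂 : Type) [Field 𝕂] [IsAlgClosed 𝕂]
    (r c m : ℕ) (hcr : c ≤ r)
    (nn : Fin (r + 1) → ℕ) (hnn : ∀ i, 0 < nn i)
    (l : ∀ i : Fin (r + 1), Fin (nn i) → ℕ) (hl : ∀ i j, 0 < l i j)
    (A : Matrix (Fin (c + 1)) (Fin (r + 1)) 𝕂)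
    (hA : ∀ s : Finset (Fin (r + 1)), s.card = c + 1 →
      LinearIndependent 𝕂 fun j : s => A.transpose (j : Fin (r + 1)))
    (z : VarIdx r m nn → 𝕂) (hz : LeafType 𝕂 r c m nn z) :
    ∃ t : VarIdx r m nn → 𝕂, (∀ v, t v ≠ 0) ∧
      ∀ t' : Fin (r - c),
        MvPolynomial.eval (fun v => t v * z v) (gPoly 𝕂 r c m hcr nn l A t') = 0 := by
  classical
  obtain ⟨I, hIcard, hI⟩ := hz
  set Z := Finset.univ.filter fun i => ∃ j, z (Sum.inl ⟨i, j⟩) = 0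
  have hZ : Z.card ≤ c :=
    (Finset.card_le_card fun i hi => by
      obtain ⟨j, hj⟩ := (Finset.mem_filter.1 hi).2
      exact hI i j hj).trans hIcard
  obtain ⟨y, hy⟩ := exists_vecMul_apply_eq_zero_iff (by simpa using hcr) A hA hZ
  have hscale (i : Fin (r + 1)) : ∃ s : Fin (nn i) → 𝕂, (∀ j, s j ≠ 0) ∧
      ∏ j, (s j * z (Sum.inl ⟨i, j⟩)) ^ l i j = (y ᵥ* A) i :=
    have : Nonempty (Fin (nn i)) := ⟨⟨0, hnn i⟩⟩
    IsAlgClosed.exists_prod_mul_pow_eq _ (hl i) _ (by simpa [Z] using hy i)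
  choose s hs0 hs using hscale
  refine ⟨Sum.elim (fun v => s v.1 v.2) 1, ?_, fun t' => ?_⟩
  · rintro (⟨i, j⟩ | k)
    exacts [hs0 i j, one_ne_zero]
  · rw [eval_gPoly]
    simpa [eval_Tmon, hs] using det_of_lastRow_eq_vecMul A (colOf r c hcr t') y

/-- If `z ∈ 𝕂^{n+m}` is of leaf type, then there is a point `t` with
all coordinates nonzero such that the componentwise product `t·z` lies in `X̄`. -/
theorem statement_13
    (𝕂 : Type) [Field 𝕂] [IsAlgClosed 𝕂] [CharZero 𝕂]
    (r c m : ℕ) (hc : 0 < c) (hcr : c ≤ r)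
    (nn : Fin (r + 1) → ℕ) (hnn : ∀ i, 0 < nn i)
    (l : ∀ i : Fin (r + 1), Fin (nn i) → ℕ) (hl : ∀ i j, 0 < l i j)
    (A : Matrix (Fin (c + 1)) (Fin (r + 1)) 𝕂)
    (hA : ∀ s : Finset (Fin (r + 1)), s.card = c + 1 →
      LinearIndependent 𝕂 fun j : s => A.transpose (j : Fin (r + 1)))
    (z : VarIdx r m nn → 𝕂) (hz : LeafType 𝕂 r c m nn z) :
    ∃ t : VarIdx r m nn → 𝕂, (∀ v, t v ≠ 0) ∧
      ∀ t' : Fin (r - c),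
        MvPolynomial.eval (fun v => t v * z v) (gPoly 𝕂 r c m hcr nn l A t') = 0 :=
  statement_13_general 𝕂 r c m hcr nn hnn l hl A hA z hz
end

section
/- For every z ∈ X̄, the following are equivalent: (1) the Jacobian matrix J(z) has rank strictly less than r−c; (2) z is of big type and there exist c+2 indices 0 ≤ i_1 < … < i_{c+2} ≤ r such that each i_q fulfills one of the two conditions: (a) z_{i_q j} = 0 and l_{i_q j} ≥ 2 for at least one j ∈ {1,…,n_{i_q}}, or (b) z_{i_q j} = 0 and l_{i_q j} = 1 for at least two distinct j ∈ {1,…,n_{i_q}}. -/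
open MvPolynomial

/-!
Laplace expansion along the last row writes `g_t = ∑_i e_{t i} T_i^{l_i}`, where the row `e_t`
is supported on the columns `0, …, c, c+t`, is nonzero there, and is orthogonal to the rows
of `A`; the entry in column `c+t` singles out `e_t`, so the rows `e_t` span `ker A`. Hence
`J(z) = E · D(z)`, with `E` the matrix of rows `e_t` and `D(z)` the Jacobian of the monomials
`T_i^{l_i}`, and a relation `w · J(z) = 0` with `w ≠ 0` is the same as a nonzero
`v = w · E ∈ ker A` supported on the set `Z` of indices `i` where the gradient of `T_i^{l_i}`
vanishes at `z`. As any `c+1` columns of `A` are independent, such a `v` exists iff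
`|Z| ≥ c+2`, and `i ∈ Z` is exactly condition (a) or (b). Finally `z ∈ X̄` says that `u = (T_i^{l_i}(z))_i` is orthogonal to `ker A`; vanishing
on the `≥ c+1` indices of `Z`, it vanishes identically, which is the big type condition.
-/

open MvPolynomial Matrix Finset

section LinearAlgebra

variable {K ι κ : Type*} [Field K]

theorem Matrix.rank_lt_card_height_iff_exists_vecMul_eq_zero [Fintype ι] [Fintype κ]
    (M : Matrix κ ι K) :
    M.rank < Fintype.card κ ↔ ∃ w ≠ 0, w ᵥ* M = 0 := by
  have hli : LinearIndependent K M.row ↔ M.rank = Fintype.card κ := by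
    rw [linearIndependent_iff_card_eq_finrank_span, rank_eq_finrank_span_row, Set.finrank, eq_comm]
  rw [lt_iff_le_and_ne, ne_eq, ← hli, and_iff_right M.rank_le_card_height,
    Fintype.not_linearIndependent_iff]
  simp only [vecMul_eq_sum, ne_eq, funext_iff, Pi.zero_apply, not_forall]
  exact exists_congr fun w => and_comm

theorem Matrix.eq_zero_of_mulVec_eq_zero_of_linearIndepOn [Fintype ι] {A : Matrix κ ι K}
    {s : Finset ι} (hs : LinearIndepOn K Aᵀ s) {v : ι → K} (hv : A *ᵥ v = 0)
    (hvs : ∀ i ∉ s, v i = 0) : v = 0 := by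
  funext i
  by_cases hi : i ∈ s
  · refine linearIndepOn_finset_iff.mp hs v ?_ i hi
    rw [sum_subset (subset_univ s) fun i _ hi => by rw [hvs i hi, zero_smul], ← vecMul_eq_sum,
      vecMul_transpose, hv]
  · exact hvs i hi

theorem Matrix.exists_mulVec_eq_zero_of_card_lt [Fintype ι] [Fintype κ] (A : Matrix κ ι K)
    {s : Finset ι} (hs : Fintype.card κ < s.card) : ∃ v ≠ 0, A *ᵥ v = 0 ∧ ∀ i ∉ s, v i = 0 := by
  classical
  have hdep : ¬ LinearIndepOn K Aᵀ s := fun h => by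
    have := h.fintype_card_le_finrank
    simp only [coe_sort_coe, Fintype.card_coe, Module.finrank_fintype_fun_eq_card] at this
    omega
  obtain ⟨f, hf, i, hi, hfi⟩ := not_linearIndepOn_finset_iff.mp hdep
  refine ⟨fun i => if i ∈ s then f i else 0, fun h => hfi (by simpa [hi] using congrFun h i),
    ?_, fun i hi => if_neg hi⟩
  rw [← vecMul_transpose, vecMul_eq_sum]
  simpa [ite_smul] using hf

variable {c : ℕ} {A : Matrix (Fin (c + 1)) ι K}

theorem Matrix.exists_mulVec_eq_zero_support_subset_iff [Fintype ι]
    (hA : ∀ s : Finset ι, s.card = c + 1 → LinearIndepOn K Aᵀ s)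
    (hι : c + 1 ≤ Fintype.card ι) {s : Finset ι} :
    (∃ v ≠ 0, A *ᵥ v = 0 ∧ ∀ i ∉ s, v i = 0) ↔ c + 2 ≤ s.card := by
  refine ⟨fun ⟨v, hv0, hAv, hvs⟩ => ?_, fun hs => A.exists_mulVec_eq_zero_of_card_lt (by simpa)⟩
  by_contra! hs
  obtain ⟨t, hst, -, ht⟩ := exists_subsuperset_card_eq (n := c + 1) (subset_univ s)
    (by omega) (by simpa)
  exact hv0 (eq_zero_of_mulVec_eq_zero_of_linearIndepOn (hA t ht) hAv
    fun i hi => hvs i fun his => hi (hst his))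

theorem Matrix.eq_zero_of_dotProduct_eq_zero_of_mulVec_eq_zero [Fintype ι]
    (hA : ∀ s : Finset ι, s.card = c + 1 → LinearIndepOn K Aᵀ s) {u : ι → K}
    (hu : ∀ v, A *ᵥ v = 0 → v ⬝ᵥ u = 0) {s : Finset ι} (hs : c + 1 ≤ s.card)
    (hus : ∀ i ∈ s, u i = 0) : u = 0 := by
  classical
  obtain ⟨t, hts, ht⟩ := exists_subset_card_eq hs
  funext i
  by_cases hi : i ∈ t
  · exact hus i (hts hi)
  obtain ⟨v, hv0, hAv, hvt⟩ := A.exists_mulVec_eq_zero_of_card_lt (s := insert i t)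
    (by simp [card_insert_of_notMem hi, ht])
  have hvi : v i ≠ 0 := fun h => hv0 <| eq_zero_of_mulVec_eq_zero_of_linearIndepOn (hA t ht) hAv
    fun k hk => by
      by_cases hki : k = i
      · exact hki ▸ h
      · exact hvt k (by simp [hki, hk])
  have hdot : v ⬝ᵥ u = v i * u i := by
    refine sum_eq_single i (fun k _ hki => ?_) (by simp)
    by_cases hk : k ∈ t
    · rw [hus k (hts hk), mul_zero]
    · rw [hvt k (by simp [hki, hk]), zero_mul]
  exact (mul_eq_zero.mp (hdot ▸ hu v hAv)).resolve_left hvi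

theorem Matrix.det_submatrix_ne_zero_of_injective
    (hA : ∀ s : Finset ι, s.card = c + 1 → LinearIndepOn K Aᵀ s) {g : Fin (c + 1) → ι}
    (hg : Function.Injective g) : (A.submatrix id g).det ≠ 0 := by
  classical
  have hli : LinearIndepOn K Aᵀ (Set.range g) := by
    simpa using hA (univ.image g) (by rw [card_image_of_injective _ hg, card_fin])
  rw [← isUnit_iff_ne_zero, ← isUnit_iff_isUnit_det, ← linearIndependent_cols_iff_isUnit]
  exact (linearIndepOn_range_iff hg _).mp hli

end LinearAlgebra

section BorderedDeterminant

variable {R : Type*} [CommRing R] {k : ℕ}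

/-- The cofactor of the entry `p` of a row appended below `M`. -/
def Matrix.lastRowCofactor (M : Matrix (Fin (k + 1)) (Fin (k + 2)) R) (p : Fin (k + 2)) : R :=
  (-1) ^ (k + 1 + (p : ℕ)) * (M.submatrix id p.succAbove).det

theorem Matrix.det_of_dite_eq_sum_lastRowCofactor (M : Matrix (Fin (k + 1)) (Fin (k + 2)) R)
    (w : Fin (k + 2) → R) :
    (of fun q p : Fin (k + 2) => if h : (q : ℕ) < k + 1 then M ⟨q, h⟩ p else w p).det =
      ∑ p, w p * M.lastRowCofactor p := by
  rw [det_succ_row _ (Fin.last (k + 1))]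
  refine sum_congr rfl fun p _ => ?_
  have hsub : (of fun q p : Fin (k + 2) => if h : (q : ℕ) < k + 1 then M ⟨q, h⟩ p else w p
      ).submatrix (Fin.last (k + 1)).succAbove p.succAbove = M.submatrix id p.succAbove := by
    ext q q'
    simp [Fin.succAbove_last, Nat.lt_succ_iff.mp q.isLt]
  simp only [hsub, of_apply, Fin.val_last, lt_irrefl, dite_false, lastRowCofactor]
  ring

theorem Matrix.sum_mul_lastRowCofactor_eq_zero (M : Matrix (Fin (k + 1)) (Fin (k + 2)) R)
    (q : Fin (k + 1)) : ∑ p, M q p * M.lastRowCofactor p = 0 := by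
  rw [← det_of_dite_eq_sum_lastRowCofactor]
  refine det_zero_of_row_eq (i := q.castSucc) (j := Fin.last (k + 1))
    (Fin.castSucc_lt_last q).ne (funext fun p => ?_)
  simp

theorem Matrix.lastRowCofactor_map {S : Type*} [CommRing S] (f : R →+* S)
    (M : Matrix (Fin (k + 1)) (Fin (k + 2)) R) (p : Fin (k + 2)) :
    (M.map f).lastRowCofactor p = f (M.lastRowCofactor p) := by
  simp [lastRowCofactor, RingHom.map_det, RingHom.mapMatrix_apply, submatrix_map]

end BorderedDeterminant

section Coefficients

variable {𝕂 : Type} [Field 𝕂] {r c : ℕ} (hcr : c ≤ r)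

theorem val_colOf_last (t : Fin (r - c)) :
    (colOf r c hcr t (Fin.last (c + 1)) : ℕ) = c + 1 + t := by
  simp [colOf]

theorem colOf_injective (t : Fin (r - c)) : Function.Injective (colOf r c hcr t) := by
  intro p p' h
  have h' := congrArg Fin.val h
  simp only [colOf] at h'
  ext
  split_ifs at h' <;> simp_all <;> omega

/-- Row `t` holds the coefficients of `g_t` in the monomials `T_i^{l_i}`. -/
def gCoeff (A : Matrix (Fin (c + 1)) (Fin (r + 1)) 𝕂) : Matrix (Fin (r - c)) (Fin (r + 1)) 𝕂 :=
  of fun t => ∑ p,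
    Pi.single (colOf r c hcr t p) ((A.submatrix id (colOf r c hcr t)).lastRowCofactor p)

variable {hcr} {A : Matrix (Fin (c + 1)) (Fin (r + 1)) 𝕂}

theorem sum_gCoeff_smul {M : Type*} [AddCommMonoid M] [Module 𝕂 M] (t : Fin (r - c))
    (y : Fin (r + 1) → M) :
    ∑ i, gCoeff hcr A t i • y i =
      ∑ p, (A.submatrix id (colOf r c hcr t)).lastRowCofactor p • y (colOf r c hcr t p) := by
  simp only [gCoeff, of_apply, Finset.sum_apply, sum_smul]
  rw [sum_comm]
  simp [Pi.single_apply, ite_smul]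

theorem gPoly_eq_sum_gCoeff_smul (m : ℕ) (nn : Fin (r + 1) → ℕ)
    (l : ∀ i : Fin (r + 1), Fin (nn i) → ℕ) (t : Fin (r - c)) :
    gPoly 𝕂 r c m hcr nn l A t = ∑ i, gCoeff hcr A t i • Tmon 𝕂 r m nn l i := by
  rw [sum_gCoeff_smul, gPoly]
  refine (det_of_dite_eq_sum_lastRowCofactor ((A.submatrix id (colOf r c hcr t)).map C)
    fun p => Tmon 𝕂 r m nn l (colOf r c hcr t p)).trans (sum_congr rfl fun p _ => ?_)
  rw [lastRowCofactor_map, smul_eq_C_mul, mul_comm]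

theorem mul_gCoeff_transpose : A * (gCoeff hcr A)ᵀ = 0 := by
  ext q t
  rw [mul_apply, Matrix.zero_apply,
    ← sum_mul_lastRowCofactor_eq_zero (A.submatrix id (colOf r c hcr t)) q]
  simpa [mul_comm] using sum_gCoeff_smul (hcr := hcr) (A := A) t (fun i => A q i)

theorem mulVec_vecMul_gCoeff (w : Fin (r - c) → 𝕂) : A *ᵥ (w ᵥ* gCoeff hcr A) = 0 := by
  rw [← mulVec_transpose, mulVec_mulVec, mul_gCoeff_transpose, zero_mulVec]

theorem gCoeff_colOf (t : Fin (r - c)) (p : Fin (c + 2)) :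
    gCoeff hcr A t (colOf r c hcr t p) = (A.submatrix id (colOf r c hcr t)).lastRowCofactor p := by
  simp [gCoeff, Pi.single_apply, (colOf_injective hcr t).eq_iff]

theorem gCoeff_colOf_last_of_ne {s t : Fin (r - c)} (h : s ≠ t) :
    gCoeff hcr A t (colOf r c hcr s (Fin.last (c + 1))) = 0 := by
  simp only [gCoeff, of_apply, Finset.sum_apply, Pi.single_apply]
  refine sum_eq_zero fun p _ => if_neg fun hp => h (Fin.ext ?_)
  have hv := congrArg Fin.val hp
  rw [val_colOf_last] at hv
  simp only [colOf] at hv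
  split_ifs at hv <;> simp only at hv <;> omega

theorem lastRowCofactor_ne_zero
    (hA : ∀ s : Finset (Fin (r + 1)), s.card = c + 1 → LinearIndepOn 𝕂 Aᵀ s)
    (t : Fin (r - c)) (p : Fin (c + 2)) :
    (A.submatrix id (colOf r c hcr t)).lastRowCofactor p ≠ 0 :=
  mul_ne_zero (pow_ne_zero _ (neg_ne_zero.mpr one_ne_zero)) <|
    det_submatrix_ne_zero_of_injective hA <|
      (colOf_injective hcr t).comp Fin.succAbove_right_injective

theorem vecMul_gCoeff_colOf_last (w : Fin (r - c) → 𝕂) (s : Fin (r - c)) :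
    (w ᵥ* gCoeff hcr A) (colOf r c hcr s (Fin.last (c + 1))) =
      w s * (A.submatrix id (colOf r c hcr s)).lastRowCofactor (Fin.last (c + 1)) := by
  rw [vecMul, dotProduct, sum_eq_single s (fun t _ hts => by
    rw [gCoeff_colOf_last_of_ne (Ne.symm hts), mul_zero]) (by simp), gCoeff_colOf]

end Coefficients

section Kernel

variable {𝕂 : Type} [Field 𝕂] {r c : ℕ} {hcr : c ≤ r} {A : Matrix (Fin (c + 1)) (Fin (r + 1)) 𝕂}

theorem vecMul_gCoeff_ne_zero
    (hA : ∀ s : Finset (Fin (r + 1)), s.card = c + 1 → LinearIndepOn 𝕂 Aᵀ s)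
    {w : Fin (r - c) → 𝕂} (hw : w ≠ 0) : w ᵥ* gCoeff hcr A ≠ 0 := by
  obtain ⟨s, hs⟩ := Function.ne_iff.mp hw
  intro h
  have hs' := congrFun h (colOf r c hcr s (Fin.last (c + 1)))
  rw [vecMul_gCoeff_colOf_last, Pi.zero_apply] at hs'
  exact mul_ne_zero hs (lastRowCofactor_ne_zero hA s _) hs'

theorem exists_vecMul_gCoeff_eq
    (hA : ∀ s : Finset (Fin (r + 1)), s.card = c + 1 → LinearIndepOn 𝕂 Aᵀ s)
    {v : Fin (r + 1) → 𝕂} (hv : A *ᵥ v = 0) : ∃ w, w ᵥ* gCoeff hcr A = v := by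
  refine ⟨fun s => v (colOf r c hcr s (Fin.last (c + 1))) /
    (A.submatrix id (colOf r c hcr s)).lastRowCofactor (Fin.last (c + 1)), ?_⟩
  have hheads : LinearIndepOn 𝕂 Aᵀ ↑(univ.map (Fin.castLEEmb (by omega : c + 1 ≤ r + 1))) :=
    hA _ (by simp)
  -- `v - w ᵥ* gCoeff` vanishes on the columns `c+1, …, r` and lies in `ker A`, so the independent
  -- columns `0, …, c` force it to be zero.
  rw [eq_comm, ← sub_eq_zero]
  refine eq_zero_of_mulVec_eq_zero_of_linearIndepOn hheads
    (by rw [mulVec_sub, hv, mulVec_vecMul_gCoeff, sub_zero]) fun i hi => ?_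
  have hci : c < (i : ℕ) := by
    by_contra! h
    exact hi (mem_map.mpr ⟨⟨i, by omega⟩, mem_univ _, Fin.ext rfl⟩)
  obtain ⟨s, rfl⟩ : ∃ s, colOf r c hcr s (Fin.last (c + 1)) = i :=
    ⟨⟨i - (c + 1), by omega⟩, Fin.ext (by rw [val_colOf_last, Fin.val_mk]; omega)⟩
  rw [Pi.sub_apply, vecMul_gCoeff_colOf_last, div_mul_cancel₀ _ (lastRowCofactor_ne_zero hA _ _),
    sub_self]

end Kernel

theorem MvPolynomial.pderiv_prod_eq_zero {σ ι R : Type*} [CommSemiring R] {v : σ}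
    {s : Finset ι} {f : ι → MvPolynomial σ R} (h : ∀ k ∈ s, pderiv v (f k) = 0) :
    pderiv v (∏ k ∈ s, f k) = 0 :=
  prod_induction f (fun g => pderiv v g = 0)
    (fun a b ha hb => by rw [pderiv_mul, ha, hb, zero_mul, mul_zero, add_zero])
    (pderiv v).map_one_eq_zero h

theorem MvPolynomial.eval_pderiv_prod_X_pow {ι R : Type*} [CommRing R] [Fintype ι]
    [DecidableEq ι] (l : ι → ℕ) (z : ι → R) (j : ι) :
    eval z (pderiv j (∏ k, X k ^ l k)) = l j * z j ^ (l j - 1) * ∏ k ∈ univ.erase j, z k ^ l k := by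
  rw [← mul_prod_erase univ _ (mem_univ j), pderiv_mul, pderiv_prod_eq_zero fun k hk => by
    rw [pderiv_pow, pderiv_X_of_ne (ne_of_mem_erase hk), mul_zero], mul_zero, add_zero,
    pderiv_pow, pderiv_X_self]
  simp

theorem MvPolynomial.forall_eval_pderiv_prod_X_pow_eq_zero_iff {ι K : Type*} [Field K]
    [CharZero K] [Fintype ι] [Nonempty ι] {l : ι → ℕ} (hl : ∀ j, 0 < l j) (z : ι → K) :
    (∀ j, eval z (pderiv j (∏ k, X k ^ l k)) = 0) ↔
      (∃ j, z j = 0 ∧ 2 ≤ l j) ∨ ∃ j j', j ≠ j' ∧ z j = 0 ∧ z j' = 0 ∧ l j = 1 ∧ l j' = 1 := by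
  classical
  have hterm : ∀ j, eval z (pderiv j (∏ k, X k ^ l k)) = 0 ↔
      (z j = 0 ∧ 2 ≤ l j) ∨ ∃ k ≠ j, z k = 0 := by
    intro j
    have hl₂ : ¬ l j - 1 = 0 ↔ 2 ≤ l j := by have := hl j; omega
    simp [eval_pderiv_prod_X_pow, prod_eq_zero_iff, pow_eq_zero_iff', (hl _).ne', hl₂]
  simp_rw [hterm]
  constructor
  · intro h
    by_cases ha : ∃ j, z j = 0 ∧ 2 ≤ l j
    · exact Or.inl ha
    push Not at ha
    have hone : ∀ j, z j = 0 → l j = 1 := fun j hj => by have := ha j hj; have := hl j; omega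
    obtain ⟨j⟩ := ‹Nonempty ι›
    obtain ⟨k, -, hk⟩ := (h j).resolve_left fun hj => (ha j hj.1).not_ge hj.2
    obtain ⟨k', hk'k, hk'⟩ := (h k).resolve_left fun hk => (ha k hk.1).not_ge hk.2
    exact Or.inr ⟨k', k, hk'k, hk', hk, hone k' hk', hone k hk⟩
  · rintro (⟨j₀, hz, hl₂⟩ | ⟨j₀, j₁, hne, hz₀, hz₁, -, -⟩) j
    · by_cases hj : j = j₀
      · exact Or.inl (hj ▸ ⟨hz, hl₂⟩)
      · exact Or.inr ⟨j₀, Ne.symm hj, hz⟩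
    · by_cases hj : j = j₀
      · exact Or.inr ⟨j₁, hj ▸ hne.symm, hz₁⟩
      · exact Or.inr ⟨j₀, Ne.symm hj, hz₀⟩

section Jacobian

variable {𝕂 : Type} [Field 𝕂] {r c m : ℕ} {nn : Fin (r + 1) → ℕ}
  {l : ∀ i : Fin (r + 1), Fin (nn i) → ℕ}

theorem Tmon_eq_rename (i : Fin (r + 1)) :
    Tmon 𝕂 r m nn l i = rename (fun j => (Sum.inl ⟨i, j⟩ : VarIdx r m nn)) (∏ j, X j ^ l i j) := by
  simp [Tmon, map_prod]

theorem eval_pderiv_Tmon (z : VarIdx r m nn → 𝕂) (i : Fin (r + 1)) (j : Fin (nn i)) :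
    eval z (pderiv (Sum.inl ⟨i, j⟩) (Tmon 𝕂 r m nn l i)) =
      eval (fun k => z (Sum.inl ⟨i, k⟩)) (pderiv j (∏ k, X k ^ l i k)) := by
  rw [Tmon_eq_rename, pderiv_rename (f := fun k : Fin (nn i) => (Sum.inl ⟨i, k⟩ : VarIdx r m nn))
    (Sum.inl_injective.comp sigma_mk_injective), eval_rename]
  rfl

theorem pderiv_Tmon_of_ne {v : VarIdx r m nn} {i : Fin (r + 1)}
    (h : ∀ j, v ≠ Sum.inl ⟨i, j⟩) : pderiv v (Tmon 𝕂 r m nn l i) = 0 :=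
  pderiv_prod_eq_zero fun j _ => by rw [pderiv_pow, pderiv_X_of_ne (h j).symm, mul_zero]

theorem eval_Tmon_eq_zero_iff (hl : ∀ i j, 0 < l i j) (z : VarIdx r m nn → 𝕂)
    (i : Fin (r + 1)) : eval z (Tmon 𝕂 r m nn l i) = 0 ↔ ∃ j, z (Sum.inl ⟨i, j⟩) = 0 := by
  simp [Tmon, prod_eq_zero_iff, (hl _ _).ne']

variable (l) in
noncomputable def tmonJacobian (z : VarIdx r m nn → 𝕂) : Matrix (Fin (r + 1)) (VarIdx r m nn) 𝕂 :=
  of fun i v => eval z (pderiv v (Tmon 𝕂 r m nn l i))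

variable (l) in
open Classical in
noncomputable def tmonCritical (z : VarIdx r m nn → 𝕂) : Finset (Fin (r + 1)) :=
  univ.filter fun i => ∀ j, eval z (pderiv (Sum.inl ⟨i, j⟩) (Tmon 𝕂 r m nn l i)) = 0

theorem mem_tmonCritical_iff [CharZero 𝕂] (hnn : ∀ i, 0 < nn i) (hl : ∀ i j, 0 < l i j)
    (z : VarIdx r m nn → 𝕂) (i : Fin (r + 1)) :
    i ∈ tmonCritical l z ↔
      (∃ j : Fin (nn i), z (Sum.inl ⟨i, j⟩) = 0 ∧ 2 ≤ l i j) ∨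
      (∃ j j' : Fin (nn i), j ≠ j' ∧ z (Sum.inl ⟨i, j⟩) = 0 ∧
        z (Sum.inl ⟨i, j'⟩) = 0 ∧ l i j = 1 ∧ l i j' = 1) := by
  have : Nonempty (Fin (nn i)) := ⟨⟨0, hnn i⟩⟩
  simp only [tmonCritical, mem_filter, mem_univ, true_and, eval_pderiv_Tmon]
  exact forall_eval_pderiv_prod_X_pow_eq_zero_iff (hl i) _

theorem vecMul_tmonJacobian_eq_zero_iff (z : VarIdx r m nn → 𝕂) (x : Fin (r + 1) → 𝕂) :
    x ᵥ* tmonJacobian l z = 0 ↔ ∀ i ∉ tmonCritical l z, x i = 0 := by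
  classical
  have hinl : ∀ i j, (x ᵥ* tmonJacobian l z) (Sum.inl ⟨i, j⟩) =
      x i * eval z (pderiv (Sum.inl ⟨i, j⟩) (Tmon 𝕂 r m nn l i)) := fun i j => by
    simp only [vecMul, dotProduct, tmonJacobian, of_apply]
    refine sum_eq_single i (fun i' _ hi' => ?_) (by simp)
    rw [pderiv_Tmon_of_ne fun j' h => hi' (congrArg Sigma.fst (Sum.inl_injective h)).symm,
      map_zero, mul_zero]
  have hinr : ∀ k, (x ᵥ* tmonJacobian l z) (Sum.inr k) = 0 := fun k => by
    simp only [vecMul, dotProduct, tmonJacobian, of_apply]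
    exact sum_eq_zero fun i _ => by rw [pderiv_Tmon_of_ne (by simp), map_zero, mul_zero]
  constructor
  · intro h i hi
    obtain ⟨j, hj⟩ : ∃ j, eval z (pderiv (Sum.inl ⟨i, j⟩) (Tmon 𝕂 r m nn l i)) ≠ 0 := by
      simpa [tmonCritical] using hi
    exact (mul_eq_zero.mp ((hinl i j).symm.trans (congrFun h _))).resolve_right hj
  · intro h
    funext v
    rcases v with ⟨i, j⟩ | k
    · rw [hinl, Pi.zero_apply]
      by_cases hi : i ∈ tmonCritical l z
      · rw [(mem_filter.mp hi).2 j, mul_zero]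
      · rw [h i hi, zero_mul]
    · exact hinr k

variable {hcr : c ≤ r} {A : Matrix (Fin (c + 1)) (Fin (r + 1)) 𝕂}

theorem Jac_eq_gCoeff_mul_tmonJacobian (z : VarIdx r m nn → 𝕂) :
    Jac 𝕂 r c m hcr nn l A z = gCoeff hcr A * tmonJacobian l z := by
  ext t v
  simp [Jac, gPoly_eq_sum_gCoeff_smul, mul_apply, tmonJacobian]

theorem rank_Jac_lt_iff
    (hA : ∀ s : Finset (Fin (r + 1)), s.card = c + 1 → LinearIndepOn 𝕂 Aᵀ s)
    (z : VarIdx r m nn → 𝕂) :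
    (Jac 𝕂 r c m hcr nn l A z).rank < r - c ↔
      ∃ v ≠ 0, A *ᵥ v = 0 ∧ ∀ i ∉ tmonCritical l z, v i = 0 := by
  have hrank := rank_lt_card_height_iff_exists_vecMul_eq_zero (Jac 𝕂 r c m hcr nn l A z)
  rw [Fintype.card_fin] at hrank
  simp_rw [hrank, Jac_eq_gCoeff_mul_tmonJacobian, ← vecMul_vecMul, vecMul_tmonJacobian_eq_zero_iff]
  constructor
  · rintro ⟨w, hw, hsupp⟩
    exact ⟨w ᵥ* gCoeff hcr A, vecMul_gCoeff_ne_zero hA hw, mulVec_vecMul_gCoeff w, hsupp⟩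
  · rintro ⟨v, hv, hAv, hsupp⟩
    obtain ⟨w, rfl⟩ := exists_vecMul_gCoeff_eq (hcr := hcr) hA hAv
    exact ⟨w, fun h => hv (by rw [h, zero_vecMul]), hsupp⟩

theorem bigType_of_card_tmonCritical [CharZero 𝕂] (hnn : ∀ i, 0 < nn i)
    (hl : ∀ i j, 0 < l i j)
    (hA : ∀ s : Finset (Fin (r + 1)), s.card = c + 1 → LinearIndepOn 𝕂 Aᵀ s)
    {z : VarIdx r m nn → 𝕂} (hz : ∀ t, eval z (gPoly 𝕂 r c m hcr nn l A t) = 0)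
    (hcard : c + 1 ≤ (tmonCritical l z).card) : BigType 𝕂 r m nn z := by
  set u : Fin (r + 1) → 𝕂 := fun i => eval z (Tmon 𝕂 r m nn l i)
  have hgu : gCoeff hcr A *ᵥ u = 0 := funext fun t => by
    simpa [gPoly_eq_sum_gCoeff_smul, mulVec, dotProduct, u] using hz t
  have hu : ∀ v, A *ᵥ v = 0 → v ⬝ᵥ u = 0 := fun v hv => by
    obtain ⟨w, rfl⟩ := exists_vecMul_gCoeff_eq (hcr := hcr) hA hv
    rw [← dotProduct_mulVec, hgu, dotProduct_zero]
  have hcrit : ∀ i ∈ tmonCritical l z, u i = 0 := fun i hi => by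
    rcases (mem_tmonCritical_iff hnn hl z i).mp hi with ⟨j, hj, -⟩ | ⟨j, -, -, hj, -⟩ <;>
      exact (eval_Tmon_eq_zero_iff hl z i).mpr ⟨j, hj⟩
  have hu0 := eq_zero_of_dotProduct_eq_zero_of_mulVec_eq_zero hA hu hcard hcrit
  exact fun i => (eval_Tmon_eq_zero_iff hl z i).mp (congrFun hu0 i)

end Jacobian

theorem statement_14_general
    (𝕂 : Type) [Field 𝕂] [CharZero 𝕂]
    (r c m : ℕ) (hcr : c ≤ r)
    (nn : Fin (r + 1) → ℕ) (hnn : ∀ i, 0 < nn i)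
    (l : ∀ i : Fin (r + 1), Fin (nn i) → ℕ) (hl : ∀ i j, 0 < l i j)
    (A : Matrix (Fin (c + 1)) (Fin (r + 1)) 𝕂)
    (hA : ∀ s : Finset (Fin (r + 1)), s.card = c + 1 →
      LinearIndependent 𝕂 fun j : s => A.transpose (j : Fin (r + 1)))
    (z : VarIdx r m nn → 𝕂)
    (hz : ∀ t : Fin (r - c), MvPolynomial.eval z (gPoly 𝕂 r c m hcr nn l A t) = 0) :
    (Jac 𝕂 r c m hcr nn l A z).rank < r - c ↔
      (BigType 𝕂 r m nn z ∧
        ∃ I : Finset (Fin (r + 1)), I.card = c + 2 ∧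
          ∀ i ∈ I,
            (∃ j : Fin (nn i), z (Sum.inl ⟨i, j⟩) = 0 ∧ 2 ≤ l i j) ∨
            (∃ j j' : Fin (nn i), j ≠ j' ∧ z (Sum.inl ⟨i, j⟩) = 0 ∧
              z (Sum.inl ⟨i, j'⟩) = 0 ∧ l i j = 1 ∧ l i j' = 1)) := by
  have hcols : c + 1 ≤ Fintype.card (Fin (r + 1)) := by simpa using hcr
  rw [rank_Jac_lt_iff hA, exists_mulVec_eq_zero_support_subset_iff hA hcols]
  constructor
  · intro hcard
    obtain ⟨I, hI, hIcard⟩ := exists_subset_card_eq hcard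
    exact ⟨bigType_of_card_tmonCritical hnn hl hA hz (by omega), I, hIcard,
      fun i hi => (mem_tmonCritical_iff hnn hl z i).mp (hI hi)⟩
  · rintro ⟨-, I, hIcard, hI⟩
    exact hIcard ▸ card_le_card fun i hi => (mem_tmonCritical_iff hnn hl z i).mpr (hI i hi)

/-- For `z ∈ X̄`, the Jacobian `J(z)` has rank `< r−c` iff `z` is
of big type and there are `c+2` indices `i` each of which admits either a vanishing
coordinate `z_{ij}` with `l_{ij} ≥ 2`, or two distinct vanishing coordinates
`z_{ij} = z_{ij'} = 0` with `l_{ij} = l_{ij'} = 1`. -/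
theorem statement_14
    (𝕂 : Type) [Field 𝕂] [IsAlgClosed 𝕂] [CharZero 𝕂]
    (r c m : ℕ) (hc : 0 < c) (hcr : c ≤ r)
    (nn : Fin (r + 1) → ℕ) (hnn : ∀ i, 0 < nn i)
    (l : ∀ i : Fin (r + 1), Fin (nn i) → ℕ) (hl : ∀ i j, 0 < l i j)
    (A : Matrix (Fin (c + 1)) (Fin (r + 1)) 𝕂)
    (hA : ∀ s : Finset (Fin (r + 1)), s.card = c + 1 →
      LinearIndependent 𝕂 fun j : s => A.transpose (j : Fin (r + 1)))
    (z : VarIdx r m nn → 𝕂)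
    (hz : ∀ t : Fin (r - c), MvPolynomial.eval z (gPoly 𝕂 r c m hcr nn l A t) = 0) :
    (Jac 𝕂 r c m hcr nn l A z).rank < r - c ↔
      (BigType 𝕂 r m nn z ∧
        ∃ I : Finset (Fin (r + 1)), I.card = c + 2 ∧
          ∀ i ∈ I,
            (∃ j : Fin (nn i), z (Sum.inl ⟨i, j⟩) = 0 ∧ 2 ≤ l i j) ∨
            (∃ j j' : Fin (nn i), j ≠ j' ∧ z (Sum.inl ⟨i, j⟩) = 0 ∧
              z (Sum.inl ⟨i, j'⟩) = 0 ∧ l i j = 1 ∧ l i j' = 1)) :=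
  statement_14_general 𝕂 r c m hcr nn hnn l hl A hA z hz
end

section
/- Assume r > c and fix i ∈ {0,…,r} and j ∈ {1,…,n_i}. (a) There exists a point z ∈ X̄ whose set of nonzero coordinates is exactly {z_{ij}} (i.e., z_{ij} ≠ 0 and all other coordinates, of both kinds, vanish) if and only if n_i ≥ 2. (b) If moreover the exponent data is irredundant and n_i ≥ 2, then every z ∈ X̄ whose set of nonzero coordinates is exactly {z_{ij}} satisfies rank J(z) = r−c if and only if r = c+1, n_i = 2 and l_{ij'} = 1 for the unique index j' ≠ j. -/
open MvPolynomial

namespace Stmt17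

open MvPolynomial Finset

lemma pderiv_finset_prod {R σ ι : Type*} [CommSemiring R] [DecidableEq ι] (v : σ)
    (s : Finset ι) (f : ι → MvPolynomial σ R) :
    pderiv v (∏ a ∈ s, f a) = ∑ a ∈ s, pderiv v (f a) * ∏ b ∈ s.erase a, f b := by
  classical
  induction s using Finset.induction with
  | empty => simp
  | @insert a s ha ih =>
      rw [Finset.prod_insert ha, pderiv_mul, ih, Finset.sum_insert ha,
        Finset.erase_insert ha, Finset.mul_sum]
      congr 1
      apply Finset.sum_congr rfl
      intro b hb
      rw [Finset.erase_insert_of_ne]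
      · rw [Finset.prod_insert (fun h => ha (Finset.mem_of_mem_erase h))]
        ring
      · rintro rfl; exact ha hb

lemma rank_le_one_of_cols {p q K : Type*} [Fintype p] [Fintype q] [DecidableEq q] [Field K]
    (M : Matrix p q K) (v₀ : q) (h : ∀ t v, v ≠ v₀ → M t v = 0) : M.rank ≤ 1 := by
  classical
  have hM : M = (Matrix.of fun t (_ : Fin 1) => M t v₀) *
      (Matrix.of fun (_ : Fin 1) v => if v = v₀ then (1 : K) else 0) := by
    ext t v
    simp only [Matrix.mul_apply, Fin.sum_univ_one, Matrix.of_apply]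
    by_cases hv : v = v₀
    · subst hv; simp
    · simp [hv, h t v hv]
  have h1 : M.rank ≤ ((Matrix.of fun t (_ : Fin 1) => M t v₀) : Matrix p (Fin 1) K).rank := by
    conv_lhs => rw [hM]
    exact Matrix.rank_mul_le_left (Matrix.of fun t (_ : Fin 1) => M t v₀)
      (Matrix.of fun (_ : Fin 1) v => if v = v₀ then (1 : K) else 0)
  have h2 : ((Matrix.of fun t (_ : Fin 1) => M t v₀) : Matrix p (Fin 1) K).rank ≤
      Fintype.card (Fin 1) := Matrix.rank_le_card_width _
  simpa using h1.trans h2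

lemma rank_pos_of_ne_zero {p q K : Type*} [Fintype p] [Fintype q] [DecidableEq q] [Field K]
    {M : Matrix p q K} (h : M ≠ 0) : 0 < M.rank := by
  classical
  obtain ⟨t, v, hv⟩ : ∃ t v, M t v ≠ 0 := by
    by_contra hc
    push_neg at hc
    exact h (by ext t v; simpa using hc t v)
  rw [Matrix.rank, Module.finrank_pos_iff]
  refine nontrivial_of_ne ⟨M.mulVecLin (Pi.single v 1), LinearMap.mem_range_self _ _⟩ 0 ?_
  intro hzero
  apply hv
  have := congr_arg (fun x : LinearMap.range M.mulVecLin => (x : p → K) t) hzero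
  simpa [Matrix.mulVecLin, Matrix.mulVec_single] using this

lemma exists_ne_of_two_le {N : ℕ} (h : 2 ≤ N) (a : Fin N) : ∃ b : Fin N, b ≠ a := by
  have : Nontrivial (Fin N) := Fin.nontrivial_iff_two_le.mpr h
  exact exists_ne a

lemma exists_ne_ne_of_three_le {N : ℕ} (h : 3 ≤ N) (a b : Fin N) :
    ∃ x : Fin N, x ≠ a ∧ x ≠ b := by
  have hns : ¬ ((Finset.univ : Finset (Fin N)) ⊆ {a, b}) := by
    intro hsub
    have h1 := Finset.card_le_card hsub
    have h2 : ({a, b} : Finset (Fin N)).card ≤ 2 :=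
      (Finset.card_insert_le _ _).trans (by simp)
    simp [Finset.card_univ] at h1
    omega
  obtain ⟨x, -, hx⟩ := Finset.not_subset.1 hns
  refine ⟨x, ?_, ?_⟩ <;> simp only [Finset.mem_insert, Finset.mem_singleton] at hx <;> tauto

lemma eq_or_eq_of_card_two {N : ℕ} (h : N = 2) {a b : Fin N} (hab : a ≠ b) (x : Fin N) :
    x = a ∨ x = b := by
  subst h
  have hne : (a : ℕ) ≠ (b : ℕ) := fun hh => hab (Fin.ext hh)
  have ha := a.isLt; have hb := b.isLt; have hx := x.isLt
  have : (x : ℕ) = a ∨ (x : ℕ) = b := by omega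
  rcases this with h | h
  · exact Or.inl (Fin.ext h)
  · exact Or.inr (Fin.ext h)

end Stmt17

namespace Stmt17

open MvPolynomial Finset

section Core

variable {𝕂 : Type} [Field 𝕂] {r c m : ℕ} {nn : Fin (r + 1) → ℕ}

lemma colOf_injective (hcr : c ≤ r) (t : Fin (r - c)) :
    Function.Injective (colOf r c hcr t) := by
  intro p p' h
  have hp := p.isLt; have hp' := p'.isLt
  unfold colOf at h
  split_ifs at h <;> rw [Fin.mk.injEq] at h <;> (apply Fin.ext; omega)

/-- The `(c+1)×(c+1)` minor of `A` obtained by deleting column `p` of the matrix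
defining `g_t`. -/
def minor (hcr : c ≤ r) (A : Matrix (Fin (c + 1)) (Fin (r + 1)) 𝕂)
    (t : Fin (r - c)) (p : Fin (c + 2)) : 𝕂 :=
  Matrix.det (Matrix.of fun q q' : Fin (c + 1) => A q (colOf r c hcr t (p.succAbove q')))

lemma minor_ne_zero (hcr : c ≤ r) {A : Matrix (Fin (c + 1)) (Fin (r + 1)) 𝕂}
    (hA : ∀ s : Finset (Fin (r + 1)), s.card = c + 1 →
      LinearIndependent 𝕂 fun j : s => A.transpose (j : Fin (r + 1)))
    (t : Fin (r - c)) (p : Fin (c + 2)) : minor hcr A t p ≠ 0 := by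
  classical
  set φ : Fin (c + 1) → Fin (r + 1) := fun q' => colOf r c hcr t (p.succAbove q') with hφ
  have hφinj : Function.Injective φ :=
    (colOf_injective hcr t).comp (Fin.succAbove_right_injective)
  set s : Finset (Fin (r + 1)) := Finset.image φ Finset.univ with hs
  have hcard : s.card = c + 1 := by
    rw [hs, Finset.card_image_of_injective _ hφinj, Finset.card_univ, Fintype.card_fin]
  have hli := hA s hcard
  have hmem : ∀ q', φ q' ∈ s := fun q' => Finset.mem_image_of_mem _ (Finset.mem_univ _)
  have hli2 : LinearIndependent 𝕂 fun q' : Fin (c + 1) => A.transpose (φ q') :=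
    hli.comp (fun q' : Fin (c + 1) => (⟨φ q', hmem q'⟩ : s))
      (fun a b hab => hφinj (by simpa using congrArg Subtype.val hab))
  have hunit : IsUnit ((Matrix.of fun q' q => A.transpose (φ q') q) :
      Matrix (Fin (c + 1)) (Fin (c + 1)) 𝕂) := by
    rw [← Matrix.linearIndependent_rows_iff_isUnit]
    exact hli2
  have hdet : ((Matrix.of fun q' q => A.transpose (φ q') q) :
      Matrix (Fin (c + 1)) (Fin (c + 1)) 𝕂).det ≠ 0 :=
    ((Matrix.isUnit_iff_isUnit_det _).1 hunit).ne_zero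
  have heq : minor hcr A t p = ((Matrix.of fun q' q => A.transpose (φ q') q) :
      Matrix (Fin (c + 1)) (Fin (c + 1)) 𝕂).det := by
    rw [minor, ← Matrix.det_transpose]
    congr 1
  rw [heq]; exact hdet

lemma gPoly_expand (hcr : c ≤ r) (l : ∀ i : Fin (r + 1), Fin (nn i) → ℕ)
    (A : Matrix (Fin (c + 1)) (Fin (r + 1)) 𝕂) (t : Fin (r - c)) :
    gPoly 𝕂 r c m hcr nn l A t =
      ∑ p : Fin (c + 2), C ((-1) ^ (c + 1 + (p : ℕ)) * minor hcr A t p) *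
        Tmon 𝕂 r m nn l (colOf r c hcr t p) := by
  rw [gPoly]
  set M : Matrix (Fin (c + 2)) (Fin (c + 2)) (MvPolynomial (VarIdx r m nn) 𝕂) :=
    Matrix.of fun q p : Fin (c + 2) =>
      if h : (q : ℕ) < c + 1 then C (A ⟨q, h⟩ (colOf r c hcr t p))
      else Tmon 𝕂 r m nn l (colOf r c hcr t p) with hM
  rw [Matrix.det_succ_row M (Fin.last (c + 1))]
  apply Finset.sum_congr rfl
  intro p _
  have hentry : M (Fin.last (c + 1)) p = Tmon 𝕂 r m nn l (colOf r c hcr t p) := by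
    rw [hM]; simp
  have hsubm : M.submatrix (Fin.last (c + 1)).succAbove p.succAbove =
      (C : 𝕂 →+* MvPolynomial (VarIdx r m nn) 𝕂).mapMatrix
        (Matrix.of fun q q' : Fin (c + 1) => A q (colOf r c hcr t (p.succAbove q'))) := by
    ext q q'
    rw [Matrix.submatrix_apply, Fin.succAbove_last, hM]
    have hq : ((q.castSucc : Fin (c + 2)) : ℕ) < c + 1 := by simpa using q.isLt
    have hqq : (⟨((q.castSucc : Fin (c + 2)) : ℕ), hq⟩ : Fin (c + 1)) = q :=
      Fin.ext (by simp)
    simp only [Matrix.of_apply, dif_pos hq, RingHom.mapMatrix_apply, Matrix.map_apply,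
      Matrix.of_apply, hqq]
  have hdet : (M.submatrix (Fin.last (c + 1)).succAbove p.succAbove).det =
      C (minor hcr A t p) := by
    rw [hsubm, ← RingHom.map_det]; rfl
  rw [hentry, hdet]
  simp only [Fin.val_last, map_mul, map_pow, map_neg, map_one]
  ring

lemma eval_gPoly_expand (hcr : c ≤ r) (l : ∀ i : Fin (r + 1), Fin (nn i) → ℕ)
    (A : Matrix (Fin (c + 1)) (Fin (r + 1)) 𝕂) (t : Fin (r - c)) (z : VarIdx r m nn → 𝕂) :
    eval z (gPoly 𝕂 r c m hcr nn l A t) =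
      ∑ p : Fin (c + 2), (-1) ^ (c + 1 + (p : ℕ)) * minor hcr A t p *
        eval z (Tmon 𝕂 r m nn l (colOf r c hcr t p)) := by
  rw [gPoly_expand hcr l A t, map_sum]
  exact Finset.sum_congr rfl fun p _ => by rw [map_mul, eval_C]

lemma eval_pderiv_gPoly (hcr : c ≤ r) (l : ∀ i : Fin (r + 1), Fin (nn i) → ℕ)
    (A : Matrix (Fin (c + 1)) (Fin (r + 1)) 𝕂) (t : Fin (r - c)) (v : VarIdx r m nn)
    (z : VarIdx r m nn → 𝕂) :
    eval z (pderiv v (gPoly 𝕂 r c m hcr nn l A t)) =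
      ∑ p : Fin (c + 2), (-1) ^ (c + 1 + (p : ℕ)) * minor hcr A t p *
        eval z (pderiv v (Tmon 𝕂 r m nn l (colOf r c hcr t p))) := by
  rw [gPoly_expand hcr l A t, map_sum, map_sum]
  exact Finset.sum_congr rfl fun p _ => by rw [pderiv_C_mul, map_mul, eval_C]

lemma eval_Tmon (l : ∀ i : Fin (r + 1), Fin (nn i) → ℕ) (z : VarIdx r m nn → 𝕂)
    (i' : Fin (r + 1)) :
    eval z (Tmon 𝕂 r m nn l i') = ∏ j'' : Fin (nn i'), z (Sum.inl ⟨i', j''⟩) ^ l i' j'' := by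
  simp [Tmon]

lemma eval_pderiv_Tmon (l : ∀ i : Fin (r + 1), Fin (nn i) → ℕ) (z : VarIdx r m nn → 𝕂)
    (v : VarIdx r m nn) (i' : Fin (r + 1)) :
    eval z (pderiv v (Tmon 𝕂 r m nn l i')) =
      ∑ j'' : Fin (nn i'),
        (if v = Sum.inl ⟨i', j''⟩ then (l i' j'' : 𝕂) * z v ^ (l i' j'' - 1) else 0) *
          ∏ j''' ∈ Finset.univ.erase j'', z (Sum.inl ⟨i', j'''⟩) ^ l i' j''' := by
  classical
  rw [Tmon, pderiv_finset_prod, map_sum]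
  apply Finset.sum_congr rfl
  intro j'' _
  rw [map_mul, map_prod]
  congr 1
  · rw [pderiv_pow]
    by_cases hv : v = Sum.inl ⟨i', j''⟩
    · rw [if_pos hv, hv, pderiv_X_self]
      simp
    · rw [if_neg hv, pderiv_X_of_ne (Ne.symm hv)]
      simp
  · exact Finset.prod_congr rfl fun j''' _ => by simp

lemma inl_ne_of_fst {i' i : Fin (r + 1)} (h : i' ≠ i) (j'' : Fin (nn i')) (j : Fin (nn i)) :
    (Sum.inl ⟨i', j''⟩ : VarIdx r m nn) ≠ Sum.inl ⟨i, j⟩ := by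
  intro hh
  exact h (congrArg Sigma.fst (Sum.inl.inj hh))

lemma inl_ne_of_snd {i : Fin (r + 1)} {j'' j : Fin (nn i)} (h : j'' ≠ j) :
    (Sum.inl ⟨i, j''⟩ : VarIdx r m nn) ≠ Sum.inl ⟨i, j⟩ := by
  intro hh
  exact h (eq_of_heq (Sigma.mk.inj_iff.mp (Sum.inl.inj hh)).2)

variable {l : ∀ i : Fin (r + 1), Fin (nn i) → ℕ} {A : Matrix (Fin (c + 1)) (Fin (r + 1)) 𝕂}
  {i : Fin (r + 1)} {j : Fin (nn i)} {z : VarIdx r m nn → 𝕂}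

lemma zero_off (hz : ∀ v : VarIdx r m nn, z v ≠ 0 ↔ v = Sum.inl ⟨i, j⟩) :
    ∀ v, v ≠ Sum.inl ⟨i, j⟩ → z v = 0 := by
  intro v hv
  by_contra h
  exact hv ((hz v).1 h)

lemma eval_Tmon_zero (hz : ∀ v : VarIdx r m nn, z v ≠ 0 ↔ v = Sum.inl ⟨i, j⟩)
    (hnn : ∀ i', 0 < nn i') (hl : ∀ i' j', 0 < l i' j') (h2 : 2 ≤ nn i)
    (i' : Fin (r + 1)) : eval z (Tmon 𝕂 r m nn l i') = 0 := by
  rw [eval_Tmon]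
  by_cases hii : i' = i
  · subst hii
    obtain ⟨j'', hj''⟩ := exists_ne_of_two_le h2 j
    apply Finset.prod_eq_zero (Finset.mem_univ j'')
    rw [zero_off hz _ (inl_ne_of_snd hj'')]
    exact zero_pow (hl i' j'').ne'
  · apply Finset.prod_eq_zero (Finset.mem_univ (⟨0, hnn i'⟩ : Fin (nn i')))
    rw [zero_off hz _ (inl_ne_of_fst hii _ _)]
    exact zero_pow (hl i' _).ne'

lemma eval_Tmon_other (hz : ∀ v : VarIdx r m nn, z v ≠ 0 ↔ v = Sum.inl ⟨i, j⟩)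
    (hnn : ∀ i', 0 < nn i') (hl : ∀ i' j', 0 < l i' j')
    {i' : Fin (r + 1)} (hii : i' ≠ i) : eval z (Tmon 𝕂 r m nn l i') = 0 := by
  rw [eval_Tmon]
  apply Finset.prod_eq_zero (Finset.mem_univ (⟨0, hnn i'⟩ : Fin (nn i')))
  rw [zero_off hz _ (inl_ne_of_fst hii _ _)]
  exact zero_pow (hl i' _).ne'

lemma eval_Tmon_self_one (h1 : nn i = 1) :
    eval z (Tmon 𝕂 r m nn l i) = z (Sum.inl ⟨i, j⟩) ^ l i j := by
  rw [eval_Tmon]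
  have hall : ∀ x : Fin (nn i), x = j := fun x =>
    Fin.ext (by have := x.isLt; have := j.isLt; omega)
  have huniv : (Finset.univ : Finset (Fin (nn i))) = {j} :=
    Finset.eq_singleton_iff_unique_mem.mpr ⟨Finset.mem_univ _, fun x _ => hall x⟩
  rw [huniv, Finset.prod_singleton]

end Core

end Stmt17

namespace Stmt17

open MvPolynomial Finset

section Core2

variable {𝕂 : Type} [Field 𝕂] {r c m : ℕ} {nn : Fin (r + 1) → ℕ}
  {l : ∀ i : Fin (r + 1), Fin (nn i) → ℕ} {A : Matrix (Fin (c + 1)) (Fin (r + 1)) 𝕂}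
  {i : Fin (r + 1)} {j : Fin (nn i)} {z : VarIdx r m nn → 𝕂}

/-- The key vanishing lemma for partial derivatives of the monomials `T_{i'}^{l_{i'}}`. -/
lemma eval_pderiv_Tmon_eq_zero
    (hz : ∀ v : VarIdx r m nn, z v ≠ 0 ↔ v = Sum.inl ⟨i, j⟩)
    (hl : ∀ i' j', 0 < l i' j') (hirr : ∀ i', 2 ≤ ∑ j', l i' j') (h2 : 2 ≤ nn i)
    (v : VarIdx r m nn)
    (hv : ∀ j' : Fin (nn i), v = Sum.inl ⟨i, j'⟩ → j' ≠ j → nn i = 2 → l i j' = 1 → False)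
    (i' : Fin (r + 1)) :
    eval z (pderiv v (Tmon 𝕂 r m nn l i')) = 0 := by
  rw [eval_pderiv_Tmon]
  apply Finset.sum_eq_zero
  intro j'' _
  by_cases hvj : v = Sum.inl ⟨i', j''⟩
  case neg => rw [if_neg hvj, zero_mul]
  case pos =>
    by_cases hii : i' = i
    · subst hii
      by_cases hjj : j'' = j
      · subst hjj
        obtain ⟨j''', hj'''⟩ := exists_ne_of_two_le h2 j''
        apply mul_eq_zero_of_right
        apply Finset.prod_eq_zero (Finset.mem_erase.2 ⟨hj''', Finset.mem_univ _⟩)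
        rw [zero_off hz _ (inl_ne_of_snd hj''')]
        exact zero_pow (hl i' j''').ne'
      · have hzv : z v = 0 := zero_off hz v (by rw [hvj]; exact inl_ne_of_snd hjj)
        rcases Nat.lt_or_ge (l i' j'') 2 with hlt | hge
        · have hl1' : l i' j'' = 1 := le_antisymm (by omega) (hl i' j'')
          have h3 : 3 ≤ nn i' := by
            rcases Nat.lt_or_ge (nn i') 3 with hlt3 | hge3
            · exact absurd hl1' (fun hc => hv j'' hvj hjj (by omega) hc)
            · exact hge3
          obtain ⟨j''', hja, hjb⟩ := exists_ne_ne_of_three_le h3 j j''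
          apply mul_eq_zero_of_right
          apply Finset.prod_eq_zero (Finset.mem_erase.2 ⟨hjb, Finset.mem_univ _⟩)
          rw [zero_off hz _ (inl_ne_of_snd hja)]
          exact zero_pow (hl i' j''').ne'
        · apply mul_eq_zero_of_left
          rw [if_pos hvj, hzv, zero_pow (by omega : l i' j'' - 1 ≠ 0), mul_zero]
    · have hzv : z v = 0 := zero_off hz v (by rw [hvj]; exact inl_ne_of_fst hii _ _)
      rcases Nat.lt_or_ge (l i' j'') 2 with hlt | hge
      · have hl1' : l i' j'' = 1 := le_antisymm (by omega) (hl i' j'')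
        have h2' : 2 ≤ nn i' := by
          by_contra hlt2
          push_neg at hlt2
          have h1 : nn i' = 1 := by have := j''.isLt; omega
          have hall : ∀ x : Fin (nn i'), x = j'' := fun x =>
            Fin.ext (by have := x.isLt; have := j''.isLt; omega)
          have huniv : (Finset.univ : Finset (Fin (nn i'))) = {j''} :=
            Finset.eq_singleton_iff_unique_mem.mpr ⟨Finset.mem_univ _, fun x _ => hall x⟩
          have := hirr i'
          rw [huniv, Finset.sum_singleton, hl1'] at this
          omega
        obtain ⟨j''', hj'''⟩ := exists_ne_of_two_le h2' j''
        apply mul_eq_zero_of_right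
        apply Finset.prod_eq_zero (Finset.mem_erase.2 ⟨hj''', Finset.mem_univ _⟩)
        rw [zero_off hz _ (inl_ne_of_fst hii _ _)]
        exact zero_pow (hl i' j''').ne'
      · apply mul_eq_zero_of_left
        rw [if_pos hvj, hzv, zero_pow (by omega : l i' j'' - 1 ≠ 0), mul_zero]

lemma eval_pderiv_Tmon_good {j' : Fin (nn i)} (hj' : j' ≠ j) (h2' : nn i = 2) (hl1 : l i j' = 1) :
    eval z (pderiv (Sum.inl ⟨i, j'⟩ : VarIdx r m nn) (Tmon 𝕂 r m nn l i)) =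
      z (Sum.inl ⟨i, j⟩) ^ l i j := by
  rw [eval_pderiv_Tmon]
  rw [Finset.sum_eq_single j']
  · have herase : (Finset.univ.erase j' : Finset (Fin (nn i))) = {j} := by
      ext x
      simp only [Finset.mem_erase, Finset.mem_univ, and_true, Finset.mem_singleton]
      constructor
      · intro hx
        rcases eq_or_eq_of_card_two h2' (Ne.symm hj') x with h | h
        · exact h
        · exact absurd h hx
      · intro hx
        rw [hx]
        exact Ne.symm hj'
    rw [if_pos rfl, hl1, herase, Finset.prod_singleton]
    simp
  · intro j'' _ hne
    rw [if_neg (inl_ne_of_snd (Ne.symm hne)), zero_mul]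
  · intro h
    exact absurd (Finset.mem_univ j') h

lemma eval_pderiv_Tmon_diff {i' : Fin (r + 1)} (hii : i' ≠ i) (j' : Fin (nn i)) :
    eval z (pderiv (Sum.inl ⟨i, j'⟩ : VarIdx r m nn) (Tmon 𝕂 r m nn l i')) = 0 := by
  rw [eval_pderiv_Tmon]
  apply Finset.sum_eq_zero
  intro j'' _
  rw [if_neg (inl_ne_of_fst (Ne.symm hii) j' j''), zero_mul]

end Core2

end Stmt17

namespace Stmt17

open MvPolynomial Finset

section Entry

variable {𝕂 : Type} [Field 𝕂] {r c m : ℕ} {nn : Fin (r + 1) → ℕ}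
  {l : ∀ i : Fin (r + 1), Fin (nn i) → ℕ} {A : Matrix (Fin (c + 1)) (Fin (r + 1)) 𝕂}
  {i : Fin (r + 1)} {j : Fin (nn i)} {z : VarIdx r m nn → 𝕂}

lemma exists_col (hcr : c ≤ r) (hrc : c < r) (i : Fin (r + 1)) :
    ∃ (t : Fin (r - c)) (p₀ : Fin (c + 2)), colOf r c hcr t p₀ = i := by
  by_cases hic : (i : ℕ) ≤ c
  · refine ⟨⟨0, by omega⟩, ⟨(i : ℕ), by omega⟩, ?_⟩
    unfold colOf
    rw [dif_pos hic]
  · push_neg at hic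
    refine ⟨⟨(i : ℕ) - (c + 1), by have := i.isLt; omega⟩, ⟨c + 1, by omega⟩, ?_⟩
    unfold colOf
    rw [dif_neg (show ¬ ((⟨c + 1, by omega⟩ : Fin (c + 2)) : ℕ) ≤ c by show ¬ (c + 1 ≤ c); omega)]
    apply Fin.ext
    show c + 1 + ((i : ℕ) - (c + 1)) = (i : ℕ)
    omega

lemma exists_col' (hcr : c ≤ r) (hr1 : r = c + 1) (t : Fin (r - c)) (i : Fin (r + 1)) :
    ∃ p₀ : Fin (c + 2), colOf r c hcr t p₀ = i := by
  have ht : (t : ℕ) = 0 := by have := t.isLt; omega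
  by_cases hic : (i : ℕ) ≤ c
  · refine ⟨⟨(i : ℕ), by omega⟩, ?_⟩
    unfold colOf
    rw [dif_pos hic]
  · push_neg at hic
    have hi1 : (i : ℕ) = c + 1 := by have := i.isLt; omega
    refine ⟨⟨c + 1, by omega⟩, ?_⟩
    unfold colOf
    rw [dif_neg (show ¬ ((⟨c + 1, by omega⟩ : Fin (c + 2)) : ℕ) ≤ c by show ¬ (c + 1 ≤ c); omega)]
    apply Fin.ext
    show c + 1 + (t : ℕ) = (i : ℕ)
    omega

lemma parta_contra (hcr : c ≤ r) (hnn : ∀ i', 0 < nn i') (hl : ∀ i' j', 0 < l i' j')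
    (hA : ∀ s : Finset (Fin (r + 1)), s.card = c + 1 →
      LinearIndependent 𝕂 fun j : s => A.transpose (j : Fin (r + 1)))
    (hrc : c < r) (hni : nn i = 1)
    (hz : ∀ v : VarIdx r m nn, z v ≠ 0 ↔ v = Sum.inl ⟨i, j⟩)
    (hP : ∀ t, eval z (gPoly 𝕂 r c m hcr nn l A t) = 0) : False := by
  obtain ⟨t, p₀, hcol⟩ := exists_col hcr hrc i
  have h := hP t
  rw [eval_gPoly_expand, Finset.sum_eq_single p₀] at h
  · rw [hcol, eval_Tmon_self_one (j := j) hni] at h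
    exact (mul_ne_zero (mul_ne_zero (pow_ne_zero _ (neg_ne_zero.2 one_ne_zero))
      (minor_ne_zero hcr hA t p₀)) (pow_ne_zero _ ((hz _).2 rfl))) h
  · intro p _ hne
    rw [eval_Tmon_other hz hnn hl
      (fun hh => hne (colOf_injective hcr t (hh.trans hcol.symm))), mul_zero]
  · exact fun h' => absurd (Finset.mem_univ _) h'

lemma entry_eq_zero (hcr : c ≤ r)
    (hz : ∀ v : VarIdx r m nn, z v ≠ 0 ↔ v = Sum.inl ⟨i, j⟩)
    (hl : ∀ i' j', 0 < l i' j') (hirr : ∀ i', 2 ≤ ∑ j', l i' j') (h2 : 2 ≤ nn i)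
    (t : Fin (r - c)) (v : VarIdx r m nn)
    (hv : ∀ j' : Fin (nn i), v = Sum.inl ⟨i, j'⟩ → j' ≠ j → nn i = 2 → l i j' = 1 → False) :
    eval z (pderiv v (gPoly 𝕂 r c m hcr nn l A t)) = 0 := by
  rw [eval_pderiv_gPoly]
  exact Finset.sum_eq_zero fun p _ => mul_eq_zero_of_right _
    (eval_pderiv_Tmon_eq_zero hz hl hirr h2 v hv _)

lemma entry_good_ne_zero (hcr : c ≤ r)
    (hA : ∀ s : Finset (Fin (r + 1)), s.card = c + 1 →
      LinearIndependent 𝕂 fun j : s => A.transpose (j : Fin (r + 1)))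
    (hz : ∀ v : VarIdx r m nn, z v ≠ 0 ↔ v = Sum.inl ⟨i, j⟩)
    (hr1 : r = c + 1) (t : Fin (r - c))
    {j' : Fin (nn i)} (hj' : j' ≠ j) (h2' : nn i = 2) (hl1 : l i j' = 1) :
    eval z (pderiv (Sum.inl ⟨i, j'⟩ : VarIdx r m nn) (gPoly 𝕂 r c m hcr nn l A t)) ≠ 0 := by
  obtain ⟨p₀, hcol⟩ := exists_col' hcr hr1 t i
  rw [eval_pderiv_gPoly, Finset.sum_eq_single p₀]
  · rw [hcol, eval_pderiv_Tmon_good hj' h2' hl1]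
    exact mul_ne_zero (mul_ne_zero (pow_ne_zero _ (neg_ne_zero.2 one_ne_zero))
      (minor_ne_zero hcr hA t p₀)) (pow_ne_zero _ ((hz _).2 rfl))
  · intro p _ hne
    rw [eval_pderiv_Tmon_diff
      (fun hh => hne (colOf_injective hcr t (hh.trans hcol.symm))) j', mul_zero]
  · exact fun h' => absurd (Finset.mem_univ _) h'

end Entry

end Stmt17

/-- Assume `r > c` and fix `i`, `j`.  (a) There is a point of `X̄`
whose only nonzero coordinate is `z_{ij}` iff `n_i ≥ 2`.  (b) If moreover the data is
irredundant and `n_i ≥ 2`, then every such point of `X̄` has full-rank Jacobian iff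
`r = c+1`, `n_i = 2` and `l_{ij'} = 1` for the index `j' ≠ j`. -/
theorem statement_17
    (𝕂 : Type) [Field 𝕂] [IsAlgClosed 𝕂] [CharZero 𝕂]
    (r c m : ℕ) (hc : 0 < c) (hcr : c ≤ r)
    (nn : Fin (r + 1) → ℕ) (hnn : ∀ i, 0 < nn i)
    (l : ∀ i : Fin (r + 1), Fin (nn i) → ℕ) (hl : ∀ i j, 0 < l i j)
    (A : Matrix (Fin (c + 1)) (Fin (r + 1)) 𝕂)
    (hA : ∀ s : Finset (Fin (r + 1)), s.card = c + 1 →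
      LinearIndependent 𝕂 fun j : s => A.transpose (j : Fin (r + 1)))
    (hrc : c < r) (i : Fin (r + 1)) (j : Fin (nn i)) :
    ((∃ z : VarIdx r m nn → 𝕂,
        (∀ t : Fin (r - c), MvPolynomial.eval z (gPoly 𝕂 r c m hcr nn l A t) = 0) ∧
        (∀ v : VarIdx r m nn, z v ≠ 0 ↔ v = Sum.inl ⟨i, j⟩)) ↔ 2 ≤ nn i) ∧
    ((∀ i' : Fin (r + 1), 2 ≤ ∑ j' : Fin (nn i'), l i' j') → 2 ≤ nn i →
      ((∀ z : VarIdx r m nn → 𝕂,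
          (∀ t : Fin (r - c), MvPolynomial.eval z (gPoly 𝕂 r c m hcr nn l A t) = 0) →
          (∀ v : VarIdx r m nn, z v ≠ 0 ↔ v = Sum.inl ⟨i, j⟩) →
          (Jac 𝕂 r c m hcr nn l A z).rank = r - c) ↔
        (r = c + 1 ∧ nn i = 2 ∧ ∀ j' : Fin (nn i), j' ≠ j → l i j' = 1))) := by
  classical
  set z₀ : VarIdx r m nn → 𝕂 := fun v => if v = Sum.inl ⟨i, j⟩ then 1 else 0 with hz₀def
  have hz₀ : ∀ v : VarIdx r m nn, z₀ v ≠ 0 ↔ v = Sum.inl ⟨i, j⟩ := by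
    intro v
    by_cases h : v = Sum.inl ⟨i, j⟩ <;> simp [hz₀def, h]
  have hJapply : ∀ (z : VarIdx r m nn → 𝕂) (t : Fin (r - c)) (v : VarIdx r m nn),
      Jac 𝕂 r c m hcr nn l A z t v =
        MvPolynomial.eval z (MvPolynomial.pderiv v (gPoly 𝕂 r c m hcr nn l A t)) :=
    fun z t v => rfl
  constructor
  · constructor
    · rintro ⟨z, hP, hz⟩
      by_contra h2
      push_neg at h2
      exact Stmt17.parta_contra hcr hnn hl hA hrc (by have := hnn i; omega) hz hP
    · intro h2
      refine ⟨z₀, fun t => ?_, hz₀⟩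
      rw [Stmt17.eval_gPoly_expand]
      exact Finset.sum_eq_zero fun p _ => mul_eq_zero_of_right _
        (Stmt17.eval_Tmon_zero hz₀ hnn hl h2 _)
  · intro hirr h2
    constructor
    · intro H
      have hP₀ : ∀ t, MvPolynomial.eval z₀ (gPoly 𝕂 r c m hcr nn l A t) = 0 := fun t => by
        rw [Stmt17.eval_gPoly_expand]
        exact Finset.sum_eq_zero fun p _ => mul_eq_zero_of_right _
          (Stmt17.eval_Tmon_zero hz₀ hnn hl h2 _)
      have hrank := H z₀ hP₀ hz₀
      by_cases hgood : ∃ j' : Fin (nn i), j' ≠ j ∧ nn i = 2 ∧ l i j' = 1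
      · obtain ⟨j', hj', hn2, hl1⟩ := hgood
        have hcols : ∀ (t : Fin (r - c)) (v : VarIdx r m nn), v ≠ Sum.inl ⟨i, j'⟩ →
            Jac 𝕂 r c m hcr nn l A z₀ t v = 0 := by
          intro t v hvne
          rw [hJapply]
          apply Stmt17.entry_eq_zero hcr hz₀ hl hirr h2 t v
          intro j'' hveq hj'' _ _
          apply hvne
          rcases Stmt17.eq_or_eq_of_card_two hn2 (Ne.symm hj') j'' with h | h
          · exact absurd h hj''
          · rw [hveq, h]
        have hle := Stmt17.rank_le_one_of_cols _ _ hcols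
        have hr1 : r = c + 1 := by omega
        refine ⟨hr1, hn2, fun j'' hj''2 => ?_⟩
        rcases Stmt17.eq_or_eq_of_card_two hn2 (Ne.symm hj') j'' with h | h
        · exact absurd h hj''2
        · rw [h]; exact hl1
      · exfalso
        have hJ0 : Jac 𝕂 r c m hcr nn l A z₀ = 0 := by
          ext t v
          rw [hJapply]
          simp only [Matrix.zero_apply]
          apply Stmt17.entry_eq_zero hcr hz₀ hl hirr h2 t v
          intro j'' _ hj'' hnn2 hl1''
          exact hgood ⟨j'', hj'', hnn2, hl1''⟩
        rw [hJ0, Matrix.rank_zero] at hrank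
        omega
    · rintro ⟨hr1, hn2, hlo⟩ z hP hz
      obtain ⟨j', hj'⟩ := Stmt17.exists_ne_of_two_le h2 j
      have hl1 := hlo j' hj'
      have hcols : ∀ (t : Fin (r - c)) (v : VarIdx r m nn), v ≠ Sum.inl ⟨i, j'⟩ →
          Jac 𝕂 r c m hcr nn l A z t v = 0 := by
        intro t v hvne
        rw [hJapply]
        apply Stmt17.entry_eq_zero hcr hz hl hirr h2 t v
        intro j'' hveq hj''2 _ _
        apply hvne
        rcases Stmt17.eq_or_eq_of_card_two hn2 (Ne.symm hj') j'' with h | h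
        · exact absurd h hj''2
        · rw [hveq, h]
      have hle := Stmt17.rank_le_one_of_cols _ _ hcols
      have hne0 : Jac 𝕂 r c m hcr nn l A z ≠ 0 := by
        intro h0
        apply Stmt17.entry_good_ne_zero hcr hA hz hr1 (⟨0, by omega⟩ : Fin (r - c))
          hj' hn2 hl1
        rw [← hJapply z ⟨0, by omega⟩ (Sum.inl ⟨i, j'⟩), h0]
        simp
      have hpos := Stmt17.rank_pos_of_ne_zero hne0
      omega
end
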